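/- arXiv:2111.00693 — 5 statements merged into one kernel-verified Lean document; each statement's English description precedes it below -/
import Mathlib

section
/- Let ℬ = (x_i)_{i∈ℕ} be a C-s-w-almost greedy Markushevich basis of 𝕏 (C > 0, 0 < s ≤ 1) in the weak sense, where the weight w satisfies ∑_{i∈ℕ} w_i = ∞, and set K := C·s⁻¹·max{2C·s⁻¹, λλ′}. Then: (i) for all finite A, B ⊂ ℕ with w(A) ≤ w(B) and all scalars (a_i)_{i∈A}, (b_i)_{i∈B} with max_{i∈A}|a_i| ≤ min_{i∈B}|b_i|, one has ‖∑_{i∈A} a_i x_i‖ ≤ K·‖∑_{i∈B} b_i x_i‖; (ii) for every 0 < t ≤ 1, every x ∈ 𝕏, every m ∈ ℕ and every A ∈ 𝒢(x,m,t), one has ‖P_A(x)‖ ≤ (1 + t⁻¹s⁻²·K)(1 + C)·‖x‖; in particular, ℬ is quasi-greedy with constant (1 + s⁻²K)(1 + C). -/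
open scoped BigOperators ENNReal
open Filter

noncomputable section

namespace GreedyPaper

variable {𝕜 : Type*} [RCLike 𝕜] {X : Type*} [NormedAddCommGroup X] [NormedSpace 𝕜 X]

/-- Support of `x` with respect to the coordinate functionals `f`. -/
def msupp (f : ℕ → X →L[𝕜] 𝕜) (x : X) : Set ℕ := {i | f i x ≠ 0}

/-- Projection onto a finite set of coordinates. -/
def proj (e : ℕ → X) (f : ℕ → X →L[𝕜] 𝕜) (A : Finset ℕ) (x : X) : X :=
  ∑ i ∈ A, f i x • e i

/-- `A` is an `m`-`t`-greedy set for `x`: `|A| = m` and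
`min_{j ∈ A} |f j x| ≥ t · sup_{k ∉ A} |f k x|`. -/
def GreedySet (f : ℕ → X →L[𝕜] 𝕜) (x : X) (m : ℕ) (t : ℝ) (A : Finset ℕ) : Prop :=
  A.card = m ∧ ∀ j ∈ A, ∀ k ∉ A, t * ‖f k x‖ ≤ ‖f j x‖

/-- `w`-measure of a set of indices, with value in `ℝ≥0∞` (possibly infinite). -/
def wsum (w : ℕ → ℝ) (S : Set ℕ) : ℝ≥0∞ := ∑' i : S, ENNReal.ofReal (w i)

/-- Sign of a scalar: `sgn 0 = 1` and `sgn t * t = |t|`. -/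
def sgn (t : 𝕜) : 𝕜 := if t = 0 then 1 else (‖t‖ : 𝕜) / t

/-- A Markushevich basis (with the boundedness assumptions of the paper):
biorthogonality, dense span, totality of the coordinate functionals, and boundedness
of both the basis vectors and the coordinate functionals. -/
structure IsMarkushevichBasis (e : ℕ → X) (f : ℕ → X →L[𝕜] 𝕜) : Prop where
  biorth : ∀ i j, f i (e j) = if i = j then 1 else 0
  dense_span : Dense ((Submodule.span 𝕜 (Set.range e) : Submodule 𝕜 X) : Set X)
  total : ∀ x : X, (∀ i, f i x = 0) → x = 0
  bddE : BddAbove (Set.range fun i => ‖e i‖)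
  bddF : BddAbove (Set.range fun i => ‖f i‖)

/-- `ℬ` is `C`-`s`-`w`-semi-greedy: for every `x` and `m` there are an `m`-`s`-greedy set `A`
and `y` supported in `A` with `‖x - y‖ ≤ C · inf {‖x - z‖ : supp z finite, w(supp z) ≤ w(A)}`. -/
def SemiGreedy (e : ℕ → X) (f : ℕ → X →L[𝕜] 𝕜) (w : ℕ → ℝ) (C s : ℝ) : Prop :=
  ∀ (x : X) (m : ℕ), ∃ A : Finset ℕ, GreedySet f x m s A ∧
    ∃ y : X, msupp f y ⊆ (A : Set ℕ) ∧
      ∀ z : X, (msupp f z).Finite → wsum w (msupp f z) ≤ wsum w (A : Set ℕ) →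
        ‖x - y‖ ≤ C * ‖x - z‖

/-- `ℬ` is `C`-`s`-`w`-almost semi-greedy. -/
def AlmostSemiGreedy (e : ℕ → X) (f : ℕ → X →L[𝕜] 𝕜) (w : ℕ → ℝ) (C s : ℝ) : Prop :=
  ∀ (x : X) (m : ℕ), ∃ A : Finset ℕ, GreedySet f x m s A ∧
    ∃ y : X, msupp f y ⊆ (A : Set ℕ) ∧
      ∀ B : Finset ℕ, wsum w (B : Set ℕ) ≤ wsum w (A : Set ℕ) →
        ‖x - y‖ ≤ C * ‖x - proj e f B x‖

/-- `ℬ` is `C`-`w`-almost greedy. -/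
def AlmostGreedy (e : ℕ → X) (f : ℕ → X →L[𝕜] 𝕜) (w : ℕ → ℝ) (C : ℝ) : Prop :=
  ∀ (x : X) (m : ℕ) (A : Finset ℕ), GreedySet f x m 1 A →
    ∀ B : Finset ℕ, wsum w (B : Set ℕ) ≤ wsum w (A : Set ℕ) →
      ‖x - proj e f A x‖ ≤ C * ‖x - proj e f B x‖

/-- `ℬ` is `C`-`w`-disjoint almost greedy. -/
def DisjointAlmostGreedy (e : ℕ → X) (f : ℕ → X →L[𝕜] 𝕜) (w : ℕ → ℝ) (C : ℝ) : Prop :=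
  ∀ (x : X) (m : ℕ) (A : Finset ℕ), GreedySet f x m 1 A →
    ∀ B : Finset ℕ, wsum w (B : Set ℕ) ≤ wsum w (A : Set ℕ) → Disjoint B A →
      ‖x - proj e f A x‖ ≤ C * ‖x - proj e f B x‖

/-- `ℬ` is `C`-`s`-`w`-almost greedy in the weak sense. -/
def WeakAlmostGreedy (e : ℕ → X) (f : ℕ → X →L[𝕜] 𝕜) (w : ℕ → ℝ) (C s : ℝ) : Prop :=
  ∀ (x : X) (m : ℕ), ∃ A : Finset ℕ, GreedySet f x m s A ∧
    ∀ B : Finset ℕ, wsum w (B : Set ℕ) ≤ wsum w (A : Set ℕ) →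
      ‖x - proj e f A x‖ ≤ C * ‖x - proj e f B x‖

/-- `ℬ` is `C`-`w`-superdemocratic. -/
def SuperDemocratic (e : ℕ → X) (f : ℕ → X →L[𝕜] 𝕜) (w : ℕ → ℝ) (C : ℝ) : Prop :=
  ∀ (A B : Finset ℕ) (ε ε' : ℕ → 𝕜), (∀ i ∈ A, ‖ε i‖ = 1) → (∀ i ∈ B, ‖ε' i‖ = 1) →
    wsum w (A : Set ℕ) ≤ wsum w (B : Set ℕ) →
      ‖∑ i ∈ A, ε i • e i‖ ≤ C * ‖∑ i ∈ B, ε' i • e i‖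

/-- `ℬ` is `C`-`w`-democratic. -/
def Democratic (e : ℕ → X) (f : ℕ → X →L[𝕜] 𝕜) (w : ℕ → ℝ) (C : ℝ) : Prop :=
  ∀ A B : Finset ℕ, wsum w (A : Set ℕ) ≤ wsum w (B : Set ℕ) →
    ‖∑ i ∈ A, e i‖ ≤ C * ‖∑ i ∈ B, e i‖

/-- `ℬ` is `C`-truncation quasi-greedy. -/
def TruncationQuasiGreedy (e : ℕ → X) (f : ℕ → X →L[𝕜] 𝕜) (C : ℝ) : Prop :=
  ∀ (x : X) (m : ℕ) (A : Finset ℕ) (hA : A.Nonempty), GreedySet f x m 1 A →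
    (A.inf' hA fun i => ‖f i x‖) * ‖∑ i ∈ A, sgn (f i x) • e i‖ ≤ C * ‖x‖

/-- `ℬ` has the `C`-`w`-Property (A). -/
def PropertyA (e : ℕ → X) (f : ℕ → X →L[𝕜] 𝕜) (w : ℕ → ℝ) (C : ℝ) : Prop :=
  ∀ x : X, (∀ i, ‖f i x‖ ≤ 1) →
    ∀ A B : Finset ℕ, wsum w (A : Set ℕ) ≤ wsum w (B : Set ℕ) → Disjoint A B →
      (∀ i ∈ A ∪ B, f i x = 0) →
      ∀ ε ε' : ℕ → 𝕜, (∀ i ∈ A, ‖ε i‖ = 1) → (∀ i ∈ B, ‖ε' i‖ = 1) →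
        ‖x + ∑ i ∈ A, ε i • e i‖ ≤ C * ‖x + ∑ i ∈ B, ε' i • e i‖

/-- The finite dimensional separation property (FDSP) with constant `M`. -/
def FDSP (e : ℕ → X) (M : ℝ) : Prop :=
  ∀ Z : Submodule 𝕜 X, IsClosed (Z : Set X) → TopologicalSpace.IsSeparable (Z : Set X) →
    ∀ ε : ℝ, 0 < ε → ∃ k : ℕ → ℕ, StrictMono k ∧
      (∀ (a : ℕ → 𝕜) (n l : ℕ), n ≤ l →
        ‖∑ j ∈ Finset.range (n + 1), a j • e (k j)‖ ≤
          (M + ε) * ‖∑ j ∈ Finset.range (l + 1), a j • e (k j)‖) ∧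
      (∀ F : Submodule 𝕜 X, F ≤ Z → FiniteDimensional 𝕜 F →
        ∃ N : ℕ, ∀ x ∈ F,
          ∀ z ∈ closure ((Submodule.span 𝕜 {v : X | ∃ n, N < n ∧ v = e (k n)} :
              Submodule 𝕜 X) : Set X),
            ‖x‖ ≤ (M + ε) * ‖x + z‖)

/-- `v` is a block basis of `e`. -/
def IsBlockBasis (e v : ℕ → X) : Prop :=
  ∃ (b : ℕ → 𝕜) (n m : ℕ → ℕ), (∀ i, n i ≤ m i) ∧ (∀ i, m i < n (i + 1)) ∧
    (∀ i, v i = ∑ k ∈ Finset.Icc (n i) (m i), b k • e k) ∧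
    (∀ i, ∃ k ∈ Finset.Icc (n i) (m i), b k ≠ 0)

-- ## auxiliary lemmas

lemma coord_sum (e : ℕ → X) (f : ℕ → X →L[𝕜] 𝕜)
    (hb : ∀ i j, f i (e j) = if i = j then 1 else 0)
    (T : Finset ℕ) (c : ℕ → 𝕜) (k : ℕ) :
    f k (∑ i ∈ T, c i • e i) = if k ∈ T then c k else 0 := by
  rw [map_sum]
  simp only [map_smul, hb, smul_eq_mul, mul_ite, mul_one, mul_zero]
  exact Finset.sum_ite_eq T k c

lemma wsum_coe (w : ℕ → ℝ) (hw : ∀ i, 0 < w i) (A : Finset ℕ) :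
    wsum w (A : Set ℕ) = ENNReal.ofReal (∑ i ∈ A, w i) := by
  rw [wsum, ENNReal.ofReal_sum_of_nonneg (fun i _ => (hw i).le)]
  exact Finset.tsum_subtype' A fun i => ENNReal.ofReal (w i)

lemma wsum_le (w : ℕ → ℝ) (hw : ∀ i, 0 < w i) {A B : Finset ℕ}
    (h : ∑ i ∈ A, w i ≤ ∑ i ∈ B, w i) :
    wsum w (A : Set ℕ) ≤ wsum w (B : Set ℕ) := by
  rw [wsum_coe w hw, wsum_coe w hw]
  exact ENNReal.ofReal_le_ofReal h

lemma wsum_le_real (w : ℕ → ℝ) (hw : ∀ i, 0 < w i) {A B : Finset ℕ}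
    (h : wsum w (A : Set ℕ) ≤ wsum w (B : Set ℕ)) :
    ∑ i ∈ A, w i ≤ ∑ i ∈ B, w i := by
  rw [wsum_coe w hw, wsum_coe w hw] at h
  exact (ENNReal.ofReal_le_ofReal_iff (Finset.sum_nonneg fun i _ => (hw i).le)).mp h

lemma exists_fresh (w : ℕ → ℝ) (hw : ∀ i, 0 < w i) (hwinf : ¬ Summable w)
    (E : Finset ℕ) (M : ℝ) :
    ∃ S : Finset ℕ, (∀ i ∈ S, i ∉ E) ∧ M ≤ ∑ i ∈ S, w i := by
  have htend := (not_summable_iff_tendsto_nat_atTop_of_nonneg (fun i => (hw i).le)).mp hwinf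
  obtain ⟨n, hn⟩ := (htend.eventually_ge_atTop (M + ∑ i ∈ E, w i)).exists
  refine ⟨Finset.range n \ E, fun i hi => (Finset.mem_sdiff.mp hi).2, ?_⟩
  have h1 : ∑ i ∈ Finset.range n ∩ E, w i ≤ ∑ i ∈ E, w i :=
    Finset.sum_le_sum_of_subset_of_nonneg Finset.inter_subset_right (fun i _ _ => (hw i).le)
  have h2 := Finset.sum_inter_add_sum_sdiff (Finset.range n) E w
  linarith

lemma le_glb {s : ℝ} (hs : 0 < s) {b : ℝ} (g : ℝ → ℝ) (hg : ContinuousAt g s⁻¹)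
    (h : ∀ R, s⁻¹ < R → b ≤ g R) : b ≤ g s⁻¹ := by
  have : Tendsto g (nhdsWithin s⁻¹ (Set.Ioi s⁻¹)) (nhds (g s⁻¹)) :=
    hg.tendsto.mono_left nhdsWithin_le_nhds
  exact ge_of_tendsto this (eventually_nhdsWithin_of_forall fun R hR => h R hR)

lemma level_finite (e : ℕ → X) (f : ℕ → X →L[𝕜] 𝕜) (hbasis : IsMarkushevichBasis e f)
    (x : X) (c : ℝ) (hc : 0 < c) : {k : ℕ | c ≤ ‖f k x‖}.Finite := by
  classical
  set lam' := ⨆ i, ‖f i‖ with hlam'def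
  have hlamle : ∀ i, ‖f i‖ ≤ lam' := fun i => le_ciSup hbasis.bddF i
  have hlam'0 : 0 ≤ lam' := (norm_nonneg _).trans (hlamle 0)
  have hd : 0 < c / (lam' + 1) := by positivity
  obtain ⟨z, hz, hdz⟩ := hbasis.dense_span.exists_dist_lt x hd
  rw [SetLike.mem_coe, Submodule.mem_span_set'] at hz
  obtain ⟨n, cf, g, hg⟩ := hz
  set idx : Fin n → ℕ := fun i => (g i).2.choose with hidx
  have hidx_spec : ∀ i, e (idx i) = (g i : X) := fun i => (g i).2.choose_spec
  set T : Finset ℕ := Finset.image idx Finset.univ with hT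
  have hzero : ∀ k, k ∉ T → f k z = 0 := by
    intro k hk
    rw [← hg, map_sum]
    refine Finset.sum_eq_zero fun i _ => ?_
    have hki : k ≠ idx i := fun h => hk (by
      rw [hT]; exact Finset.mem_image.mpr ⟨i, Finset.mem_univ i, h.symm⟩)
    rw [map_smul, ← hidx_spec i, hbasis.biorth]
    simp [hki]
  refine Set.Finite.subset T.finite_toSet ?_
  intro k hk
  simp only [Set.mem_setOf_eq] at hk
  by_contra hkT
  rw [Finset.mem_coe] at hkT
  have h1 : f k x = f k (x - z) := by rw [map_sub, hzero k hkT, sub_zero]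
  have h2 : ‖f k x‖ ≤ lam' * ‖x - z‖ := by
    rw [h1]
    exact le_trans ((f k).le_opNorm _) (mul_le_mul_of_nonneg_right (hlamle k) (norm_nonneg _))
  rw [dist_eq_norm] at hdz
  have hfe : (lam' + 1) * (c / (lam' + 1)) = c := by field_simp
  have h3 : lam' * ‖x - z‖ < c := by nlinarith [norm_nonneg (x - z)]
  linarith

-- ## the key forcing lemma

lemma forcing (e : ℕ → X) (f : ℕ → X →L[𝕜] 𝕜) (hbasis : IsMarkushevichBasis e f)
    (w : ℕ → ℝ) (hw : ∀ i, 0 < w i)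
    (C s : ℝ) (hC : 0 < C) (hs0 : 0 < s)
    (hag : WeakAlmostGreedy e f w C s)
    (P Q : Finset ℕ) (hdisj : ∀ i ∈ Q, i ∉ P)
    (hPQ : ∑ i ∈ P, w i ≤ ∑ i ∈ Q, w i)
    (γ : ℝ) (hγ : 0 < γ) (p q : ℕ → 𝕜)
    (hp : ∀ i ∈ P, ‖p i‖ ≤ γ) (hq : ∀ j ∈ Q, γ ≤ ‖q j‖)
    (R : ℝ) (hR : s⁻¹ < R) :
    ‖∑ i ∈ P, p i • e i‖ ≤ C * R * ‖∑ j ∈ Q, q j • e j‖ := by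
  classical
  have hs0' : (0:ℝ) < s⁻¹ := inv_pos.mpr hs0
  have hR0 : 0 < R := hs0'.trans hR
  have hsR : 1 < s * R := by
    have h := (mul_lt_mul_iff_right₀ hs0).mpr hR
    rwa [mul_inv_cancel₀ (ne_of_gt hs0)] at h
  set u := ∑ i ∈ P, p i • e i with hu
  set v := ∑ j ∈ Q, q j • e j with hv
  set x := u + (R : 𝕜) • v with hx
  have hcP : ∀ k ∈ P, f k x = p k := by
    intro k hk
    have hkQ : k ∉ Q := fun h => hdisj k h hk
    rw [hx, map_add, map_smul, hu, hv, coord_sum e f hbasis.biorth,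
      coord_sum e f hbasis.biorth]
    simp [hk, hkQ]
  have hcQ : ∀ k ∈ Q, f k x = (R:𝕜) * q k := by
    intro k hk
    have hkP : k ∉ P := hdisj k hk
    rw [hx, map_add, map_smul, hu, hv, coord_sum e f hbasis.biorth,
      coord_sum e f hbasis.biorth]
    simp [hk, hkP]
  have hcO : ∀ k, k ∉ P → k ∉ Q → f k x = 0 := by
    intro k hkP hkQ
    rw [hx, map_add, map_smul, hu, hv, coord_sum e f hbasis.biorth,
      coord_sum e f hbasis.biorth]
    simp [hkP, hkQ]
  obtain ⟨A'', hg, hineq⟩ := hag x Q.card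
  have hQA : A'' = Q := by
    have hsub : Q ⊆ A'' := by
      by_contra hns
      obtain ⟨d, hdQ, hdA⟩ := Finset.not_subset.mp hns
      have hd : R * γ ≤ ‖f d x‖ := by
        rw [hcQ d hdQ, norm_mul, RCLike.norm_ofReal, abs_of_pos hR0]
        exact mul_le_mul_of_nonneg_left (hq d hdQ) hR0.le
      have hbig : ∀ j ∈ A'', γ < ‖f j x‖ := by
        intro j hj
        have h1 := hg.2 j hj d hdA
        have h2 : s * (R * γ) ≤ s * ‖f d x‖ := mul_le_mul_of_nonneg_left hd hs0.le
        have h3 : γ < s * (R * γ) := by nlinarith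
        exact h3.trans_le (h2.trans h1)
      have hsubQ : A'' ⊆ Q := by
        intro j hj
        by_contra hjQ
        by_cases hjP : j ∈ P
        · have := (hbig j hj).trans_le (le_of_eq_of_le (by rw [hcP j hjP]) (hp j hjP))
          exact lt_irrefl γ this
        · have := hbig j hj
          rw [hcO j hjP hjQ] at this
          simp only [norm_zero] at this
          linarith
      have hAQ' : A'' = Q := Finset.eq_of_subset_of_card_le hsubQ (le_of_eq hg.1.symm)
      exact hdA (hAQ' ▸ hdQ)
    exact (Finset.eq_of_subset_of_card_le hsub (le_of_eq hg.1)).symm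
  rw [hQA] at hineq
  have h5 := hineq P (wsum_le w hw hPQ)
  have hprojQ : proj e f Q x = (R:𝕜) • v := by
    rw [hv, Finset.smul_sum, proj]
    exact Finset.sum_congr rfl fun j hj => by rw [hcQ j hj, mul_smul]
  have hprojP : proj e f P x = u := by
    rw [hu, proj]
    exact Finset.sum_congr rfl fun i hi => by rw [hcP i hi]
  have hxq : x - proj e f Q x = u := by rw [hprojQ, hx, add_sub_cancel_right]
  have hxp : x - proj e f P x = (R:𝕜) • v := by rw [hprojP, hx, add_sub_cancel_left]
  calc ‖u‖ = ‖x - proj e f Q x‖ := by rw [hxq]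
    _ ≤ C * ‖x - proj e f P x‖ := h5
    _ = C * (R * ‖v‖) := by rw [hxp, norm_smul, RCLike.norm_ofReal, abs_of_pos hR0]
    _ = C * R * ‖v‖ := by ring


set_option maxHeartbeats 1600000 in
/-- weak weight-almost greedy bases are quasi-greedy. -/
theorem statement8 {𝕜 : Type*} [RCLike 𝕜] {X : Type*} [NormedAddCommGroup X]
    [NormedSpace 𝕜 X] [CompleteSpace X]
    (e : ℕ → X) (f : ℕ → X →L[𝕜] 𝕜) (hbasis : IsMarkushevichBasis e f)
    (w : ℕ → ℝ) (hw : ∀ i, 0 < w i) (hwinf : ¬ Summable w)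
    (C s : ℝ) (hC : 0 < C) (hs0 : 0 < s) (hs1 : s ≤ 1)
    (hag : WeakAlmostGreedy e f w C s)
    (K : ℝ) (hK : K = C * s⁻¹ * max (2 * C * s⁻¹) ((⨆ i, ‖e i‖) * (⨆ i, ‖f i‖))) :
    (∀ A B : Finset ℕ, wsum w (A : Set ℕ) ≤ wsum w (B : Set ℕ) →
      ∀ a b : ℕ → 𝕜, (∀ i ∈ A, ∀ j ∈ B, ‖a i‖ ≤ ‖b j‖) →
        ‖∑ i ∈ A, a i • e i‖ ≤ K * ‖∑ j ∈ B, b j • e j‖) ∧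
    (∀ t : ℝ, 0 < t → t ≤ 1 → ∀ (x : X) (m : ℕ) (A : Finset ℕ), GreedySet f x m t A →
      ‖proj e f A x‖ ≤ (1 + t⁻¹ * s⁻¹ ^ 2 * K) * (1 + C) * ‖x‖) ∧
    (∀ (x : X) (m : ℕ) (A : Finset ℕ), GreedySet f x m 1 A →
      ‖proj e f A x‖ ≤ (1 + s⁻¹ ^ 2 * K) * (1 + C) * ‖x‖) := by
  classical
  set lam := ⨆ i, ‖e i‖ with hlamdef
  set lam' := ⨆ i, ‖f i‖ with hlam'def
  have hlam : ∀ i, ‖e i‖ ≤ lam := fun i => le_ciSup hbasis.bddE i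
  have hlam' : ∀ i, ‖f i‖ ≤ lam' := fun i => le_ciSup hbasis.bddF i
  have hlam0 : 0 ≤ lam := (norm_nonneg _).trans (hlam 0)
  have hlam'0 : 0 ≤ lam' := (norm_nonneg _).trans (hlam' 0)
  have hs0' : (0:ℝ) < s⁻¹ := inv_pos.mpr hs0
  have hK0 : 0 < K := by
    rw [hK]
    exact mul_pos (mul_pos hC hs0')
      (lt_of_lt_of_le (by positivity) (le_max_left _ _))
  -- Part 1
  have part1 : ∀ A B : Finset ℕ, wsum w (A : Set ℕ) ≤ wsum w (B : Set ℕ) →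
      ∀ a b : ℕ → 𝕜, (∀ i ∈ A, ∀ j ∈ B, ‖a i‖ ≤ ‖b j‖) →
        ‖∑ i ∈ A, a i • e i‖ ≤ K * ‖∑ j ∈ B, b j • e j‖ := by
    intro A B hAB a b hab
    rcases Finset.eq_empty_or_nonempty A with rfl | hA
    · simpa using mul_nonneg hK0.le (norm_nonneg _)
    have hwAB : ∑ i ∈ A, w i ≤ ∑ i ∈ B, w i := wsum_le_real w hw hAB
    have hB : B.Nonempty := by
      rcases Finset.eq_empty_or_nonempty B with rfl | hB
      · exfalso
        have := Finset.sum_pos (fun i _ => hw i) hA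
        simp only [Finset.sum_empty] at hwAB
        linarith
      · exact hB
    set γ := A.sup' hA (fun i => ‖a i‖) with hγdef
    rcases le_or_gt γ 0 with hγ | hγ
    · have hz : ∀ i ∈ A, a i • e i = 0 := by
        intro i hi
        have h1 : ‖a i‖ ≤ 0 := le_trans (by rw [hγdef]; exact Finset.le_sup' (fun i => ‖a i‖) hi) hγ
        have : a i = 0 := norm_le_zero_iff.mp h1
        simp [this]
      rw [Finset.sum_eq_zero hz]
      simpa using mul_nonneg hK0.le (norm_nonneg _)
    set β := B.inf' hB (fun j => ‖b j‖) with hβdef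
    have hγβ : γ ≤ β :=
      Finset.le_inf' _ _ fun j hj => Finset.sup'_le _ _ fun i hi => hab i hi j hj
    have hβ : 0 < β := lt_of_lt_of_le hγ hγβ
    set v := ∑ j ∈ B, b j • e j with hv
    have hvn : β ≤ lam' * ‖v‖ := by
      obtain ⟨j0, hj0⟩ := hB
      have h1 : f j0 v = b j0 := by
        rw [hv, coord_sum e f hbasis.biorth]; simp [hj0]
      calc β ≤ ‖b j0‖ := Finset.inf'_le _ hj0
        _ = ‖f j0 v‖ := by rw [h1]
        _ ≤ ‖f j0‖ * ‖v‖ := (f j0).le_opNorm v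
        _ ≤ lam' * ‖v‖ := mul_le_mul_of_nonneg_right (hlam' j0) (norm_nonneg v)
    have hv0 : (0:ℝ) ≤ ‖v‖ := norm_nonneg v
    by_cases hcase : ∃ d, d ∉ A ∧ ∑ i ∈ A, w i ≤ w d
    · -- a single heavy index
      obtain ⟨d, hdA, hwd⟩ := hcase
      have key : ∀ R, s⁻¹ < R → ‖∑ i ∈ A, a i • e i‖ ≤ C * R * (γ * lam) := by
        intro R hR
        have hR0 : 0 < R := hs0'.trans hR
        have hLL := forcing e f hbasis w hw C s hC hs0 hag A {d}
          (fun i hi => by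
            rw [Finset.mem_singleton] at hi; subst hi; exact hdA)
          (by simpa using hwd) γ hγ a (fun _ => ((γ:ℝ) : 𝕜))
          (fun i hi => by rw [hγdef]; exact Finset.le_sup' (fun i => ‖a i‖) hi)
          (fun j _ => by rw [RCLike.norm_ofReal, abs_of_pos hγ])
          R hR
        calc ‖∑ i ∈ A, a i • e i‖ ≤ C * R * ‖∑ j ∈ ({d} : Finset ℕ), ((γ:ℝ):𝕜) • e j‖ := hLL
          _ = C * R * (γ * ‖e d‖) := by
              rw [Finset.sum_singleton, norm_smul, RCLike.norm_ofReal, abs_of_pos hγ]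
          _ ≤ C * R * (γ * lam) := by
              have h1 : γ * ‖e d‖ ≤ γ * lam := mul_le_mul_of_nonneg_left (hlam d) hγ.le
              exact mul_le_mul_of_nonneg_left h1 (by positivity)
      have hlim : ‖∑ i ∈ A, a i • e i‖ ≤ C * s⁻¹ * (γ * lam) :=
        le_glb hs0 (fun R => C * R * (γ * lam)) (by fun_prop) key
      calc ‖∑ i ∈ A, a i • e i‖ ≤ C * s⁻¹ * (γ * lam) := hlim
        _ ≤ C * s⁻¹ * ((lam' * ‖v‖) * lam) := by
            have h1 : γ * lam ≤ (lam' * ‖v‖) * lam :=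
              mul_le_mul_of_nonneg_right (hγβ.trans hvn) hlam0
            exact mul_le_mul_of_nonneg_left h1 (by positivity)
        _ = (C * s⁻¹ * (lam * lam')) * ‖v‖ := by ring
        _ ≤ K * ‖v‖ := by
            refine mul_le_mul_of_nonneg_right ?_ hv0
            rw [hK]
            exact mul_le_mul_of_nonneg_left (le_max_right _ _) (by positivity)
    · push_neg at hcase
      obtain ⟨S, hSfresh, hSw⟩ := exists_fresh w hw hwinf (A ∪ B) (∑ i ∈ A, w i)
      have hfreshA : ∀ i ∈ S, i ∉ A := fun i hi h =>
        hSfresh i hi (Finset.mem_union_left _ h)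
      have hfreshB : ∀ i ∈ S, i ∉ B := fun i hi h =>
        hSfresh i hi (Finset.mem_union_right _ h)
      obtain ⟨D₁, hD₁mem, hD₁max⟩ := Finset.exists_max_image
        ((S.powerset).filter (fun T => ∑ i ∈ T, w i ≤ ∑ i ∈ B, w i))
        (fun T => ∑ i ∈ T, w i)
        ⟨∅, by
          simp only [Finset.mem_filter, Finset.mem_powerset, Finset.empty_subset,
            Finset.sum_empty, true_and]
          exact Finset.sum_nonneg fun i _ => (hw i).le⟩
      rw [Finset.mem_filter, Finset.mem_powerset] at hD₁mem
      obtain ⟨hD₁S, hD₁B⟩ := hD₁mem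
      have step2 : ∀ D' : Finset ℕ, D' ⊆ S → ∑ i ∈ D', w i ≤ ∑ i ∈ B, w i →
          ∀ R, s⁻¹ < R → ‖∑ i ∈ D', ((γ:ℝ):𝕜) • e i‖ ≤ C * R * ‖v‖ := by
        intro D' hD'S hD'B R hR
        exact forcing e f hbasis w hw C s hC hs0 hag D' B
          (fun j hj hjD' => hfreshB j (hD'S hjD') hj)
          hD'B β hβ (fun _ => ((γ:ℝ):𝕜)) b
          (fun i _ => by rw [RCLike.norm_ofReal, abs_of_pos hγ]; exact hγβ)
          (fun j hj => Finset.inf'_le _ hj) R hR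
      have hCRnn : ∀ R, s⁻¹ < R → (0:ℝ) ≤ C * R * ‖v‖ := by
        intro R hR
        have : 0 < R := hs0'.trans hR
        positivity
      have hMain : ∃ D : Finset ℕ, D ⊆ S ∧ (∑ i ∈ A, w i ≤ ∑ i ∈ D, w i) ∧
          ∀ R, s⁻¹ < R →
            ‖∑ i ∈ D, ((γ:ℝ):𝕜) • e i‖ ≤ C * R * ‖v‖ + C * R * ‖v‖ := by
        by_cases h1 : ∑ i ∈ A, w i ≤ ∑ i ∈ D₁, w i
        · refine ⟨D₁, hD₁S, h1, fun R hR => ?_⟩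
          have := step2 D₁ hD₁S hD₁B R hR
          have h2 := hCRnn R hR
          linarith
        · push_neg at h1
          have hSD₁ : ∃ d, d ∈ S ∧ d ∉ D₁ := by
            by_contra hno
            push_neg at hno
            have hsub : S ⊆ D₁ := fun i hi => hno i hi
            have := Finset.sum_le_sum_of_subset_of_nonneg hsub (fun i _ _ => (hw i).le)
            linarith
          obtain ⟨d, hdS, hdD₁⟩ := hSD₁
          have hins : ∑ i ∈ B, w i < ∑ i ∈ insert d D₁, w i := by
            by_contra hle
            push_neg at hle
            have hmem : insert d D₁ ∈
                (S.powerset).filter (fun T => ∑ i ∈ T, w i ≤ ∑ i ∈ B, w i) := by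
              rw [Finset.mem_filter, Finset.mem_powerset]
              exact ⟨Finset.insert_subset hdS hD₁S, hle⟩
            have hmax := hD₁max _ hmem
            rw [Finset.sum_insert hdD₁] at hmax
            linarith [hw d]
          refine ⟨insert d D₁, Finset.insert_subset hdS hD₁S, by linarith, ?_⟩
          intro R hR
          rw [Finset.sum_insert hdD₁]
          have hb1 : ‖∑ i ∈ ({d} : Finset ℕ), ((γ:ℝ):𝕜) • e i‖ ≤ C * R * ‖v‖ := by
            refine step2 {d} (by simpa using hdS) ?_ R hR
            simpa using ((hcase d (hfreshA d hdS)).le.trans hwAB)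
          rw [Finset.sum_singleton] at hb1
          calc ‖((γ:ℝ):𝕜) • e d + ∑ i ∈ D₁, ((γ:ℝ):𝕜) • e i‖
              ≤ ‖((γ:ℝ):𝕜) • e d‖ + ‖∑ i ∈ D₁, ((γ:ℝ):𝕜) • e i‖ := norm_add_le _ _
            _ ≤ C * R * ‖v‖ + C * R * ‖v‖ := add_le_add hb1 (step2 D₁ hD₁S hD₁B R hR)
      obtain ⟨D, hDS, hDw, hDbound⟩ := hMain
      have key : ∀ R, s⁻¹ < R →
          ‖∑ i ∈ A, a i • e i‖ ≤ C * R * (C * R * ‖v‖ + C * R * ‖v‖) := by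
        intro R hR
        have hR0 : 0 < R := hs0'.trans hR
        have hstep1 := forcing e f hbasis w hw C s hC hs0 hag A D
          (fun i hi => hfreshA i (hDS hi)) hDw γ hγ a (fun _ => ((γ:ℝ):𝕜))
          (fun i hi => by rw [hγdef]; exact Finset.le_sup' (fun i => ‖a i‖) hi)
          (fun j _ => by rw [RCLike.norm_ofReal, abs_of_pos hγ]) R hR
        exact le_trans hstep1
          (mul_le_mul_of_nonneg_left (hDbound R hR) (by positivity))
      have hlim : ‖∑ i ∈ A, a i • e i‖ ≤ C * s⁻¹ * (C * s⁻¹ * ‖v‖ + C * s⁻¹ * ‖v‖) :=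
        le_glb hs0 (fun R => C * R * (C * R * ‖v‖ + C * R * ‖v‖)) (by fun_prop) key
      have h2 : C * s⁻¹ * (2 * C * s⁻¹) ≤ K := by
        rw [hK]
        exact mul_le_mul_of_nonneg_left (le_max_left _ _) (by positivity)
      nlinarith [hv0, mul_pos hC hs0']
  -- Part 2
  have part2 : ∀ t : ℝ, 0 < t → t ≤ 1 → ∀ (x : X) (m : ℕ) (A : Finset ℕ),
      GreedySet f x m t A →
      ‖proj e f A x‖ ≤ (1 + t⁻¹ * s⁻¹ ^ 2 * K) * (1 + C) * ‖x‖ := by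
    intro t ht0 ht1 x m A hA
    set c : ℝ := t⁻¹ * s⁻¹ ^ 2 with hcdef
    have hc0 : 0 < c := by positivity
    have hcK : 0 < c * K := mul_pos hc0 hK0
    rcases Finset.eq_empty_or_nonempty A with rfl | hAne
    · rw [show proj e f (∅ : Finset ℕ) x = 0 by simp [proj], norm_zero]
      have h1 : (0:ℝ) ≤ ‖x‖ := norm_nonneg x
      exact mul_nonneg (mul_nonneg (by nlinarith) (by linarith)) h1
    set α := A.inf' hAne (fun i => ‖f i x‖) with hαdef
    obtain ⟨j0, hj0A, hj0⟩ := Finset.exists_mem_eq_inf' hAne (fun i => ‖f i x‖)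
    have hout : ∀ k, k ∉ A → t * ‖f k x‖ ≤ α := fun k hk => by
      rw [hαdef, hj0]; exact hA.2 j0 hj0A k hk
    have hinf_le : ∀ i ∈ A, α ≤ ‖f i x‖ := fun i hi => Finset.inf'_le _ hi
    rcases le_or_gt α 0 with hα0 | hα0
    · have hzero : ∀ k, k ∉ A → f k x = 0 := by
        intro k hk
        have h1 := hout k hk
        have h2 := norm_nonneg (f k x)
        have h3 : ‖f k x‖ ≤ 0 := by nlinarith
        exact norm_eq_zero.mp (le_antisymm h3 h2)
      have hxp : proj e f A x = x := by
        have htot := hbasis.total (x - proj e f A x) ?_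
        · exact (sub_eq_zero.mp htot).symm
        intro n
        rw [map_sub, proj, coord_sum e f hbasis.biorth]
        by_cases hn : n ∈ A
        · simp [hn]
        · simp [hn, hzero n hn]
      rw [hxp]
      have h1 : (0:ℝ) ≤ ‖x‖ := norm_nonneg x
      nlinarith [mul_nonneg (mul_pos hcK hC).le h1, mul_nonneg hcK.le h1,
        mul_nonneg hC.le h1]
    have hsα : 0 < s * α := mul_pos hs0 hα0
    have hfin : {k : ℕ | s * α ≤ ‖f k x‖}.Finite := level_finite e f hbasis x (s * α) hsα
    set S := hfin.toFinset with hSdef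
    have hmemS : ∀ k, k ∈ S ↔ s * α ≤ ‖f k x‖ := by
      intro k; rw [hSdef, Set.Finite.mem_toFinset]; rfl
    have hAS : A ⊆ S := by
      intro i hi
      rw [hmemS]
      nlinarith [hinf_le i hi]
    obtain ⟨A'', hg'', hineq''⟩ := hag x S.card
    have hAA'' : A ⊆ A'' := by
      by_contra hns
      obtain ⟨i, hiA, hiA''⟩ := Finset.not_subset.mp hns
      have hsub : A'' ⊆ S := by
        intro j hj
        rw [hmemS]
        have h1 := hg''.2 j hj i hiA''
        have h2 := hinf_le i hiA
        nlinarith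
      have hEq : A'' = S := Finset.eq_of_subset_of_card_le hsub (le_of_eq hg''.1.symm)
      exact hiA'' (hEq ▸ hAS hiA)
    have hlow : ∀ j ∈ A'', s ^ 2 * α ≤ ‖f j x‖ := by
      intro j hj
      by_cases hSA : ∀ k ∈ S, k ∈ A''
      · have hEq : A'' = S :=
          (Finset.eq_of_subset_of_card_le (fun k hk => hSA k hk) (le_of_eq hg''.1)).symm
        have hjS : j ∈ S := hEq ▸ hj
        rw [hmemS] at hjS
        nlinarith
      · push_neg at hSA
        obtain ⟨k0, hk0S, hk0A''⟩ := hSA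
        have h1 := hg''.2 j hj k0 hk0A''
        rw [hmemS] at hk0S
        nlinarith
    have hup : ∀ i ∈ A'' \ A, ∀ j ∈ A'', ‖f i x‖ ≤ c * ‖f j x‖ := by
      intro i hi j hj
      have hiA : i ∉ A := (Finset.mem_sdiff.mp hi).2
      have h1 := hout i hiA
      have h2 := hlow j hj
      have h3 : t * s ^ 2 * ‖f i x‖ ≤ ‖f j x‖ := by
        nlinarith [mul_le_mul_of_nonneg_left h1 (sq_nonneg s)]
      have h4 : 0 < t * s ^ 2 := by positivity
      rw [hcdef]
      rw [show t⁻¹ * s⁻¹ ^ 2 * ‖f j x‖ = (t * s ^ 2)⁻¹ * ‖f j x‖ by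
        rw [mul_inv, inv_pow]]
      rw [← sub_nonneg]
      have h5 : (t * s ^ 2)⁻¹ * ‖f j x‖ - ‖f i x‖ =
          (t * s ^ 2)⁻¹ * (‖f j x‖ - t * s ^ 2 * ‖f i x‖) := by
        field_simp
      rw [h5]
      exact mul_nonneg (by positivity) (by linarith)
    have happ := part1 (A'' \ A) A''
      (wsum_le w hw (Finset.sum_le_sum_of_subset_of_nonneg Finset.sdiff_subset
        (fun i _ _ => (hw i).le)))
      (fun i => f i x) (fun j => ((c:ℝ):𝕜) * f j x)
      (fun i hi j hj => by
        rw [norm_mul, RCLike.norm_ofReal, abs_of_pos hc0]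
        exact hup i hi j hj)
    have hRHS : ∑ j ∈ A'', (((c:ℝ):𝕜) * f j x) • e j = ((c:ℝ):𝕜) • proj e f A'' x := by
      rw [proj, Finset.smul_sum]
      exact Finset.sum_congr rfl fun j _ => mul_smul _ _ _
    rw [hRHS, norm_smul, RCLike.norm_ofReal, abs_of_pos hc0] at happ
    have hproj'' : ‖proj e f A'' x‖ ≤ (1 + C) * ‖x‖ := by
      have h0 := hineq'' ∅ (by rw [wsum_coe w hw]; simp)
      rw [show proj e f (∅ : Finset ℕ) x = 0 by simp [proj], sub_zero] at h0
      calc ‖proj e f A'' x‖ = ‖x - (x - proj e f A'' x)‖ := by rw [sub_sub_cancel]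
        _ ≤ ‖x‖ + ‖x - proj e f A'' x‖ := norm_sub_le _ _
        _ ≤ ‖x‖ + C * ‖x‖ := by linarith
        _ = (1 + C) * ‖x‖ := by ring
    have hsplit : proj e f A x = proj e f A'' x - ∑ i ∈ A'' \ A, f i x • e i := by
      have h1 := Finset.sum_sdiff (f := fun i => f i x • e i) hAA''
      rw [proj, proj, ← h1]
      abel
    rw [hsplit]
    calc ‖proj e f A'' x - ∑ i ∈ A'' \ A, f i x • e i‖
        ≤ ‖proj e f A'' x‖ + ‖∑ i ∈ A'' \ A, f i x • e i‖ := norm_sub_le _ _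
      _ ≤ ‖proj e f A'' x‖ + K * (c * ‖proj e f A'' x‖) := by linarith
      _ = (1 + c * K) * ‖proj e f A'' x‖ := by ring
      _ ≤ (1 + c * K) * ((1 + C) * ‖x‖) :=
          mul_le_mul_of_nonneg_left hproj'' (by positivity)
      _ = (1 + t⁻¹ * s⁻¹ ^ 2 * K) * (1 + C) * ‖x‖ := by rw [hcdef]; ring
  refine ⟨part1, part2, fun x m A h => ?_⟩
  have h2 := part2 1 one_pos le_rfl x m A h
  rwa [inv_one, one_mul] at h2

end GreedyPaper
end
end

section
/- Let ℬ = (x_i)_{i∈ℕ} be a C-s-w-semi-greedy Markushevich basis of 𝕏 (C > 0, 0 < s ≤ 1) for a weight w = (w_i), and set C₁ := 3C·s⁻¹·(1 + λλ′)·λ·max{2·inf_{j∈ℕ} w_j⁻¹, 1}. Then: (i) for every finite A ⊂ ℕ and every ε ∈ E_A, ‖1_{ε,A}‖ ≤ C₁·max{w(A), 1}; (ii) for every x* ∈ 𝕏* with ‖x*‖ = 1, w({j ∈ ℕ : |x*(x_j)| > C₁·w_j}) ≤ 1; (iii) for every m ∈ ℕ, the conditionality parameter satisfies k_m ≤ C₁·λ′·max{sup{w(A)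 : A ⊂ ℕ, |A| ≤ m}, 1}, where k_m := sup{‖P_A‖ : A ⊂ ℕ, |A| ≤ m} (operator norm). -/
open scoped BigOperators ENNReal
open Filter

noncomputable section

namespace GreedyPaper

variable {𝕜 : Type*} [RCLike 𝕜] {X : Type*} [NormedAddCommGroup X] [NormedSpace 𝕜 X]

/-!
Put `λ = sup ‖e i‖`, `λ' = sup ‖f i‖`, `δ = inf_j w_j⁻¹` and `K = 2 C s⁻¹ (1 + λλ') λ`.
If `j ∉ S` and `w(S) ≤ w_j`, the only `1`-`s`-greedy set of `x = 1_{ε,S} + (2/s) e_j` is `{j}`,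
while `1_{ε,S}` is a competitor of weight at most `w_j`; so `x` is `C (2/s) λ`-close to a multiple
of `e_j`, and removing the `j`-th coordinate gives `‖1_{ε,S}‖ ≤ K`. Such a `j` exists as soon as
`δ w(S) < 1`, and every finite set splits into at most `2 δ w(A) + 1` singletons and sets of this
kind, which proves (i). Testing a functional `x*` against `1_{sgn x*(e_j), F}` bounds
`∑_{j ∈ F} |x*(e_j)|` by (i); this gives (ii), and, with a norming functional of `P_A x`, (iii).
-/

theorem norm_sgn (t : 𝕜) : ‖sgn t‖ = 1 := by
  by_cases ht : t = 0
  · simp [sgn, ht]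
  · rw [sgn, if_neg ht, norm_div, RCLike.norm_ofReal, abs_norm, div_self (norm_ne_zero_iff.mpr ht)]

theorem sgn_mul_self (t : 𝕜) : sgn t * t = ‖t‖ := by
  by_cases ht : t = 0
  · simp [ht]
  · rw [sgn, if_neg ht, div_mul_cancel₀ _ ht]

theorem sum_norm_apply_le {ι : Type*} (g : X →L[𝕜] 𝕜) (v : ι → X) (A : Finset ι) :
    ∑ i ∈ A, ‖g (v i)‖ ≤ ‖g‖ * ‖∑ i ∈ A, sgn (g (v i)) • v i‖ := by
  have h : g (∑ i ∈ A, sgn (g (v i)) • v i) = ((∑ i ∈ A, ‖g (v i)‖ : ℝ) : 𝕜) := by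
    simp only [map_sum, map_smul, smul_eq_mul, sgn_mul_self]
  calc ∑ i ∈ A, ‖g (v i)‖ = ‖g (∑ i ∈ A, sgn (g (v i)) • v i)‖ := by
        rw [h, RCLike.norm_ofReal, abs_of_nonneg (Finset.sum_nonneg fun _ _ => norm_nonneg _)]
    _ ≤ ‖g‖ * ‖∑ i ∈ A, sgn (g (v i)) • v i‖ := g.le_opNorm _

section Weights

variable {w : ℕ → ℝ}

theorem wsum_mono {S T : Set ℕ} (h : S ⊆ T) : wsum w S ≤ wsum w T :=
  ENNReal.tsum_mono_subtype (fun i => ENNReal.ofReal (w i)) h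

theorem wsum_coe_finset (hw : ∀ i, 0 ≤ w i) (A : Finset ℕ) :
    wsum w A = ENNReal.ofReal (∑ i ∈ A, w i) := by
  rw [wsum, Finset.tsum_subtype' A fun i => ENNReal.ofReal (w i),
    ENNReal.ofReal_sum_of_nonneg fun i _ => hw i]

theorem wsum_le_of_forall_finset (hw : ∀ i, 0 ≤ w i) {S : Set ℕ} {c : ℝ}
    (h : ∀ A : Finset ℕ, (A : Set ℕ) ⊆ S → ∑ i ∈ A, w i ≤ c) : wsum w S ≤ ENNReal.ofReal c := by
  classical
  rw [wsum, tsum_subtype S fun i => ENNReal.ofReal (w i), ENNReal.tsum_eq_iSup_sum]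
  refine iSup_le fun A => ?_
  rw [Finset.sum_indicator_eq_sum_filter, ← ENNReal.ofReal_sum_of_nonneg fun i _ => hw i]
  exact ENNReal.ofReal_le_ofReal (h _ fun i hi => (Finset.mem_filter.mp hi).2)

theorem exists_notMem_sum_lt (hw : ∀ i, 0 < w i) {A : Finset ℕ}
    (hA : (⨅ j, (w j)⁻¹) * ∑ i ∈ A, w i < 1) : ∃ j ∉ A, ∑ i ∈ A, w i < w j := by
  have hA0 : 0 ≤ ∑ i ∈ A, w i := Finset.sum_nonneg fun i _ => (hw i).le
  rw [Real.iInf_mul_of_nonneg hA0] at hA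
  obtain ⟨j, hj⟩ := exists_lt_of_ciInf_lt hA
  have hlt : ∑ i ∈ A, w i < w j := by
    rwa [inv_mul_lt_iff₀ (hw j), mul_one] at hj
  exact ⟨j, fun hjA => (Finset.single_le_sum (fun i _ => (hw i).le) hjA).not_gt hlt, hlt⟩

end Weights

section Chunks

variable {ι : Type*} [DecidableEq ι]

theorem exists_chunk (a : ι → ℝ) {A : Finset ι} (hA : 1 ≤ ∑ i ∈ A, a i) :
    ∃ P ⊆ A, 1 / 2 ≤ ∑ i ∈ P, a i ∧ ((∃ i, P = {i}) ∨ ∑ i ∈ P, a i < 1) := by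
  induction A using Finset.induction_on with
  | empty => simp at hA; linarith
  | @insert i B hiB ih =>
    rw [Finset.sum_insert hiB] at hA
    by_cases hB : 1 ≤ ∑ j ∈ B, a j
    · obtain ⟨P, hPB, hP⟩ := ih hB
      exact ⟨P, hPB.trans (Finset.subset_insert i B), hP⟩
    by_cases hi : 1 / 2 ≤ a i
    · exact ⟨{i}, by simp, by simpa using hi, Or.inl ⟨i, rfl⟩⟩
    · exact ⟨B, Finset.subset_insert i B, by linarith, Or.inr (by linarith)⟩

theorem norm_sum_le_of_chunks {E : Type*} [SeminormedAddCommGroup E] (v : ι → E) (a : ι → ℝ)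
    (ha : ∀ i, 0 ≤ a i) {K : ℝ} (A : Finset ι)
    (hv : ∀ P ⊆ A, ((∃ i, P = {i}) ∨ ∑ i ∈ P, a i < 1) → ‖∑ i ∈ P, v i‖ ≤ K) :
    ‖∑ i ∈ A, v i‖ ≤ K * (2 * ∑ i ∈ A, a i + 1) := by
  induction A using Finset.strongInduction with
  | H A ih =>
    have hK : 0 ≤ K := by simpa using hv ∅ (Finset.empty_subset A) (Or.inr (by simp))
    by_cases hA : ∑ i ∈ A, a i < 1
    · have := hv A subset_rfl (Or.inr hA)
      nlinarith [Finset.sum_nonneg fun i (_ : i ∈ A) => ha i]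
    obtain ⟨P, hPA, hP, hPgood⟩ := exists_chunk a (not_lt.mp hA)
    have hPne : P.Nonempty := Finset.nonempty_iff_ne_empty.mpr fun h => by simp [h] at hP; linarith
    have hrest := ih (A \ P) (Finset.sdiff_ssubset hPA hPne)
      fun Q hQ => hv Q (hQ.trans Finset.sdiff_subset)
    rw [← Finset.sum_sdiff hPA, ← Finset.sum_sdiff hPA (f := a)]
    calc ‖∑ i ∈ A \ P, v i + ∑ i ∈ P, v i‖
        ≤ ‖∑ i ∈ A \ P, v i‖ + ‖∑ i ∈ P, v i‖ := norm_add_le _ _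
      _ ≤ K * (2 * ∑ i ∈ A \ P, a i + 1) + K := add_le_add hrest (hv P hPA hPgood)
      _ ≤ K * (2 * (∑ i ∈ A \ P, a i + ∑ i ∈ P, a i) + 1) := by nlinarith

end Chunks

section Basis

variable {e : ℕ → X} {f : ℕ → X →L[𝕜] 𝕜}

theorem apply_sum_smul (hbio : ∀ i j, f i (e j) = if i = j then 1 else 0)
    (A : Finset ℕ) (c : ℕ → 𝕜) (k : ℕ) :
    f k (∑ i ∈ A, c i • e i) = if k ∈ A then c k else 0 := by
  simp only [map_sum, map_smul, hbio, smul_eq_mul, mul_ite, mul_one, mul_zero,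
    Finset.sum_ite_eq]

theorem eq_sum_of_msupp_subset (hb : IsMarkushevichBasis e f) {y : X} {A : Finset ℕ}
    (h : msupp f y ⊆ A) : y = ∑ i ∈ A, f i y • e i := by
  refine (sub_eq_zero.mp (hb.total _ fun k => ?_))
  rw [map_sub, apply_sum_smul hb.biorth]
  split_ifs with hk
  · exact sub_self _
  · rw [sub_zero]
    by_contra hne
    exact hk (h hne)

theorem msupp_sum_smul_subset (hbio : ∀ i j, f i (e j) = if i = j then 1 else 0)
    (A : Finset ℕ) (c : ℕ → 𝕜) :
    msupp f (∑ i ∈ A, c i • e i) ⊆ A := by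
  intro k hk
  by_contra hkA
  exact hk (by rw [apply_sum_smul hbio, if_neg (mt Finset.mem_coe.mpr hkA)])

theorem norm_sub_apply_smul_le (hbio : ∀ i j, f i (e j) = if i = j then 1 else 0)
    (x : X) (b : 𝕜) (j : ℕ) :
    ‖x - f j x • e j‖ ≤ (1 + ‖f j‖ * ‖e j‖) * ‖x - b • e j‖ := by
  have hfj : f j (b • e j) = b := by simp [hbio]
  have hsplit : x - f j x • e j = (x - b • e j) - f j (x - b • e j) • e j := by
    rw [map_sub, hfj, sub_smul]; abel
  calc ‖x - f j x • e j‖ ≤ ‖x - b • e j‖ + ‖f j (x - b • e j)‖ * ‖e j‖ := by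
        rw [hsplit, ← norm_smul]; exact norm_sub_le _ _
    _ ≤ ‖x - b • e j‖ + ‖f j‖ * ‖x - b • e j‖ * ‖e j‖ := by
        gcongr; exact (f j).le_opNorm _
    _ = (1 + ‖f j‖ * ‖e j‖) * ‖x - b • e j‖ := by ring

end Basis

namespace SemiGreedy

variable {e : ℕ → X} {f : ℕ → X →L[𝕜] 𝕜} {w : ℕ → ℝ} {C s : ℝ}

theorem one_le (hb : IsMarkushevichBasis e f) (hsg : SemiGreedy e f w C s) : 1 ≤ C := by
  have he0 : e 0 ≠ 0 := fun h => by simpa [h] using hb.biorth 0 0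
  obtain ⟨G, ⟨hG, -⟩, y, hy, hxy⟩ := hsg (e 0) 0
  rw [Finset.card_eq_zero.mp hG] at hy
  have hy0 : y = 0 := by simpa using eq_sum_of_msupp_subset hb hy
  have hmsupp0 : msupp f (0 : X) = ∅ := by simp [msupp]
  have := hxy 0 (by simp [hmsupp0]) (by simp [hmsupp0, wsum])
  simp only [hy0, sub_zero] at this
  exact (le_mul_iff_one_le_left (norm_pos_iff.mpr he0)).mp this

theorem norm_sum_smul_le_of_sum_le (hb : IsMarkushevichBasis e f) (hsg : SemiGreedy e f w C s)
    (hs : 0 < s) (hC : 0 ≤ C) (hw : ∀ i, 0 ≤ w i) {lam lam' : ℝ} (he : ∀ i, ‖e i‖ ≤ lam)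
    (hf : ∀ i, ‖f i‖ ≤ lam') {S : Finset ℕ} {ε : ℕ → 𝕜} (hε : ∀ i ∈ S, ‖ε i‖ = 1) {j₀ : ℕ}
    (hj₀ : j₀ ∉ S) (hSj₀ : ∑ i ∈ S, w i ≤ w j₀) :
    ‖∑ i ∈ S, ε i • e i‖ ≤ 2 * C * s⁻¹ * (1 + lam * lam') * lam := by
  set c : 𝕜 := ((2 * s⁻¹ : ℝ) : 𝕜)
  have hc : ‖c‖ = 2 * s⁻¹ := by rw [RCLike.norm_ofReal, abs_of_pos (by positivity)]
  set z := ∑ i ∈ S, ε i • e i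
  set x := z + c • e j₀
  have hfx : ∀ k, f k x = (if k ∈ S then ε k else 0) + if k = j₀ then c else 0 := fun k => by
    simp only [x, z, map_add, apply_sum_smul hb.biorth, map_smul, hb.biorth, smul_eq_mul, mul_ite,
      mul_one, mul_zero]
  obtain ⟨G, ⟨hG, hgreedy⟩, y, hy, hxy⟩ := hsg x 1
  obtain ⟨i₀, rfl⟩ := Finset.card_eq_one.mp hG
  have hi₀ : i₀ = j₀ := by
    by_contra hne
    have h := hgreedy i₀ (Finset.mem_singleton_self i₀) j₀ (by simpa using Ne.symm hne)
    have hle : ‖f i₀ x‖ ≤ 1 := by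
      rw [hfx, if_neg hne, add_zero]
      split_ifs with hi
      · exact (hε i₀ hi).le
      · simp
    rw [hfx j₀, if_neg hj₀, if_pos rfl, zero_add, hc,
      show s * (2 * s⁻¹) = 2 by field_simp] at h
    linarith
  subst hi₀
  have hz : ‖x - y‖ ≤ C * (2 * s⁻¹ * lam) := by
    have hzG : wsum w (msupp f z) ≤ wsum w ({i₀} : Finset ℕ) := by
      calc wsum w (msupp f z) ≤ wsum w S := wsum_mono (msupp_sum_smul_subset hb.biorth S ε)
        _ ≤ wsum w ({i₀} : Finset ℕ) := by
          rw [wsum_coe_finset hw, wsum_coe_finset hw, Finset.sum_singleton]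
          exact ENNReal.ofReal_le_ofReal hSj₀
    calc ‖x - y‖ ≤ C * ‖x - z‖ :=
          hxy z ((S.finite_toSet).subset (msupp_sum_smul_subset hb.biorth S ε)) hzG
      _ ≤ C * (2 * s⁻¹ * lam) := by
          rw [show x - z = c • e i₀ from add_sub_cancel_left z _, norm_smul, hc]
          gcongr
          exact he i₀
  have hy : y = f i₀ y • e i₀ := by
    simpa using eq_sum_of_msupp_subset hb hy
  have hxz : z = x - f i₀ x • e i₀ := by
    rw [hfx, if_neg hj₀, if_pos rfl, zero_add]; exact (add_sub_cancel_right z _).symm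
  have hlam : 0 ≤ lam := (norm_nonneg _).trans (he 0)
  calc ‖z‖ ≤ (1 + ‖f i₀‖ * ‖e i₀‖) * ‖x - f i₀ y • e i₀‖ := by
        rw [hxz]; exact norm_sub_apply_smul_le hb.biorth x _ i₀
    _ ≤ (1 + lam * lam') * (C * (2 * s⁻¹ * lam)) := by
        have hfe : ‖f i₀‖ * ‖e i₀‖ ≤ lam * lam' := by
          rw [mul_comm lam]
          exact mul_le_mul (hf i₀) (he i₀) (norm_nonneg _) ((norm_nonneg _).trans (hf i₀))
        rw [← hy]
        exact mul_le_mul (by linarith) hz (norm_nonneg _)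
          (by linarith [mul_nonneg (norm_nonneg (f i₀)) (norm_nonneg (e i₀))])
    _ = 2 * C * s⁻¹ * (1 + lam * lam') * lam := by ring

theorem norm_sum_smul_le_of_mul_sum_lt_one (hb : IsMarkushevichBasis e f)
    (hsg : SemiGreedy e f w C s) (hs : 0 < s) (hC : 0 ≤ C) (hw : ∀ i, 0 < w i) {lam lam' : ℝ}
    (he : ∀ i, ‖e i‖ ≤ lam) (hf : ∀ i, ‖f i‖ ≤ lam') {S : Finset ℕ} {ε : ℕ → 𝕜}
    (hε : ∀ i ∈ S, ‖ε i‖ = 1) (hS : (⨅ j, (w j)⁻¹) * ∑ i ∈ S, w i < 1) :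
    ‖∑ i ∈ S, ε i • e i‖ ≤ 2 * C * s⁻¹ * (1 + lam * lam') * lam := by
  obtain ⟨j₀, hj₀, hlt⟩ := exists_notMem_sum_lt hw hS
  exact norm_sum_smul_le_of_sum_le hb hsg hs hC (fun i => (hw i).le) he hf hε hj₀ hlt.le

theorem norm_sum_smul_le (hb : IsMarkushevichBasis e f) (hsg : SemiGreedy e f w C s)
    (hs0 : 0 < s) (hs1 : s ≤ 1) (hw : ∀ i, 0 < w i) {lam lam' : ℝ} (he : ∀ i, ‖e i‖ ≤ lam)
    (hf : ∀ i, ‖f i‖ ≤ lam') (A : Finset ℕ) (ε : ℕ → 𝕜) (hε : ∀ i ∈ A, ‖ε i‖ = 1) :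
    ‖∑ i ∈ A, ε i • e i‖ ≤ 3 * C * s⁻¹ * (1 + lam * lam') * lam *
      max (2 * ⨅ j, (w j)⁻¹) 1 * max (∑ i ∈ A, w i) 1 := by
  set δ := ⨅ j, (w j)⁻¹
  set K := 2 * C * s⁻¹ * (1 + lam * lam') * lam
  have hC : 1 ≤ C := hsg.one_le hb
  have hlam : 0 ≤ lam := (norm_nonneg _).trans (he 0)
  have hlam' : 0 ≤ lam' := (norm_nonneg _).trans (hf 0)
  have hδ : 0 ≤ δ := le_ciInf fun j => (inv_pos.mpr (hw j)).le
  have hK : lam ≤ K := by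
    have hCs : 1 ≤ C * s⁻¹ := one_le_mul_of_one_le_of_one_le hC ((one_le_inv₀ hs0).mpr hs1)
    have hll : 1 ≤ 1 + lam * lam' := le_add_of_nonneg_right (mul_nonneg hlam hlam')
    have : 1 ≤ 2 * C * s⁻¹ * (1 + lam * lam') := by
      nlinarith [one_le_mul_of_one_le_of_one_le hCs hll]
    nlinarith [mul_le_mul_of_nonneg_left this hlam]
  have hsmall : ∀ P : Finset ℕ, (∀ i ∈ P, ‖ε i‖ = 1) → δ * ∑ i ∈ P, w i < 1 →
      ‖∑ i ∈ P, ε i • e i‖ ≤ K := fun P hP =>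
    norm_sum_smul_le_of_mul_sum_lt_one hb hsg hs0 (by linarith) hw he hf hP
  have hchunks : ‖∑ i ∈ A, ε i • e i‖ ≤ K * (2 * ∑ i ∈ A, δ * w i + 1) := by
    refine norm_sum_le_of_chunks _ _ (fun i => mul_nonneg hδ (hw i).le) A fun P hPA hP => ?_
    rcases hP with ⟨i, rfl⟩ | hP
    · rw [Finset.sum_singleton, norm_smul, hε i (hPA (Finset.mem_singleton_self i)), one_mul]
      exact (he i).trans hK
    · exact hsmall P (fun i hi => hε i (hPA hi)) (by rwa [Finset.mul_sum])
  rw [← Finset.mul_sum] at hchunks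
  have hA0 : 0 ≤ ∑ i ∈ A, w i := Finset.sum_nonneg fun i _ => (hw i).le
  have hK0 : 0 ≤ K := hlam.trans hK
  have hmax : 2 * δ * ∑ i ∈ A, w i ≤ max (2 * δ) 1 * max (∑ i ∈ A, w i) 1 :=
    mul_le_mul (le_max_left _ _) (le_max_left _ _) hA0 (zero_le_one.trans (le_max_right _ _))
  have hmax1 : 1 ≤ max (2 * δ) 1 * max (∑ i ∈ A, w i) 1 :=
    one_le_mul_of_one_le_of_one_le (le_max_right _ _) (le_max_right _ _)
  have hC₁ : 3 * C * s⁻¹ * (1 + lam * lam') * lam * max (2 * δ) 1 * max (∑ i ∈ A, w i) 1 =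
      3 / 2 * K * (max (2 * δ) 1 * max (∑ i ∈ A, w i) 1) := by ring
  rw [hC₁]
  by_cases hA : δ * ∑ i ∈ A, w i < 1
  · nlinarith [hsmall A hε hA]
  · nlinarith [mul_le_mul_of_nonneg_left hmax hK0]

end SemiGreedy

theorem wsum_setOf_lt_norm_apply_le_one {e : ℕ → X} {w : ℕ → ℝ} (hw : ∀ i, 0 ≤ w i) {D : ℝ}
    (hD : ∀ (A : Finset ℕ) (ε : ℕ → 𝕜), (∀ i ∈ A, ‖ε i‖ = 1) →
      ‖∑ i ∈ A, ε i • e i‖ ≤ D * max (∑ i ∈ A, w i) 1)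
    (g : X →L[𝕜] 𝕜) (hg : ‖g‖ ≤ 1) : wsum w {j | D * w j < ‖g (e j)‖} ≤ 1 := by
  rw [← ENNReal.ofReal_one]
  refine wsum_le_of_forall_finset hw fun A hA => ?_
  by_contra! hA1
  have hAne : A.Nonempty := Finset.nonempty_of_sum_ne_zero (f := w) (by linarith)
  have hlt : D * ∑ i ∈ A, w i < ∑ i ∈ A, ‖g (e i)‖ := by
    rw [Finset.mul_sum]; exact Finset.sum_lt_sum_of_nonempty hAne fun i hi => hA hi
  have hle := (sum_norm_apply_le g e A).trans
    (mul_le_of_le_one_left (norm_nonneg _) hg)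
  have := hD A (fun i => sgn (g (e i))) fun i _ => norm_sgn _
  rw [max_eq_left hA1.le] at this
  linarith

theorem norm_proj_le {e : ℕ → X} {f : ℕ → X →L[𝕜] 𝕜} {w : ℕ → ℝ} {D lam' W : ℝ}
    (hD : ∀ (A : Finset ℕ) (ε : ℕ → 𝕜), (∀ i ∈ A, ‖ε i‖ = 1) →
      ‖∑ i ∈ A, ε i • e i‖ ≤ D * max (∑ i ∈ A, w i) 1)
    (hf : ∀ i, ‖f i‖ ≤ lam') {A : Finset ℕ} (hAW : ∑ i ∈ A, w i ≤ W) (x : X) :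
    ‖proj e f A x‖ ≤ D * lam' * max W 1 * ‖x‖ := by
  have hD0 : 0 ≤ D := by simpa using hD ∅ (fun _ => 1) (by simp)
  have hcoord : ∀ i, ‖f i x‖ ≤ lam' * ‖x‖ := fun i =>
    ((f i).le_opNorm x).trans (by gcongr; exact hf i)
  obtain ⟨g, hg, hgx⟩ := exists_dual_vector'' 𝕜 (proj e f A x)
  calc ‖proj e f A x‖ = ‖g (proj e f A x)‖ := by rw [hgx, RCLike.norm_ofReal, abs_norm]
    _ ≤ ∑ i ∈ A, ‖f i x‖ * ‖g (e i)‖ := by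
        simp only [proj, map_sum, map_smul, smul_eq_mul, ← norm_mul]; exact norm_sum_le _ _
    _ ≤ ∑ i ∈ A, lam' * ‖x‖ * ‖g (e i)‖ := by gcongr; exact hcoord _
    _ = lam' * ‖x‖ * ∑ i ∈ A, ‖g (e i)‖ := by rw [Finset.mul_sum]
    _ ≤ lam' * ‖x‖ * (D * max W 1) := by
        gcongr
        · exact (norm_nonneg _).trans (hcoord 0)
        calc ∑ i ∈ A, ‖g (e i)‖ ≤ ‖∑ i ∈ A, sgn (g (e i)) • e i‖ :=
              (sum_norm_apply_le g e A).trans (mul_le_of_le_one_left (norm_nonneg _) hg)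
          _ ≤ D * max (∑ i ∈ A, w i) 1 := hD A _ fun i _ => norm_sgn _
          _ ≤ D * max W 1 := by gcongr
    _ = D * lam' * max W 1 * ‖x‖ := by ring

theorem statement12_general {𝕜 : Type*} [RCLike 𝕜] {X : Type*} [NormedAddCommGroup X]
    [NormedSpace 𝕜 X]
    (e : ℕ → X) (f : ℕ → X →L[𝕜] 𝕜) (hbasis : IsMarkushevichBasis e f)
    (w : ℕ → ℝ) (hw : ∀ i, 0 < w i)
    (C s : ℝ) (hs0 : 0 < s) (hs1 : s ≤ 1)
    (hsg : SemiGreedy e f w C s)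
    (C₁ : ℝ)
    (hC₁ : C₁ = 3 * C * s⁻¹ * (1 + (⨆ i, ‖e i‖) * (⨆ i, ‖f i‖)) * (⨆ i, ‖e i‖) *
      max (2 * ⨅ j, (w j)⁻¹) 1) :
    (∀ (A : Finset ℕ) (ε : ℕ → 𝕜), (∀ i ∈ A, ‖ε i‖ = 1) →
      ‖∑ i ∈ A, ε i • e i‖ ≤ C₁ * max (∑ i ∈ A, w i) 1) ∧
    (∀ g : X →L[𝕜] 𝕜, ‖g‖ = 1 → wsum w {j | C₁ * w j < ‖g (e j)‖} ≤ 1) ∧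
    (∀ (m : ℕ) (W : ℝ), (∀ B : Finset ℕ, B.card ≤ m → (∑ i ∈ B, w i) ≤ W) →
      ∀ A : Finset ℕ, A.card ≤ m → ∀ x : X,
        ‖proj e f A x‖ ≤ C₁ * (⨆ i, ‖f i‖) * max W 1 * ‖x‖) := by
  have he : ∀ i, ‖e i‖ ≤ ⨆ i, ‖e i‖ := le_ciSup hbasis.bddE
  have hf : ∀ i, ‖f i‖ ≤ ⨆ i, ‖f i‖ := le_ciSup hbasis.bddF
  have hsign : ∀ (A : Finset ℕ) (ε : ℕ → 𝕜), (∀ i ∈ A, ‖ε i‖ = 1) →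
      ‖∑ i ∈ A, ε i • e i‖ ≤ C₁ * max (∑ i ∈ A, w i) 1 := fun A ε hε => by
    rw [hC₁]; exact hsg.norm_sum_smul_le hbasis hs0 hs1 hw he hf A ε hε
  exact ⟨hsign, fun g hg => wsum_setOf_lt_norm_apply_le_one (fun i => (hw i).le) hsign g hg.le,
    fun m W hW A hA x => norm_proj_le hsign hf (hW A hA) x⟩

/-- upper bounds for norms of sign-indicator sums, functionals, and the
conditionality parameters of a w-semi-greedy basis. -/
theorem statement12 {𝕜 : Type*} [RCLike 𝕜] {X : Type*} [NormedAddCommGroup X]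
    [NormedSpace 𝕜 X] [CompleteSpace X]
    (e : ℕ → X) (f : ℕ → X →L[𝕜] 𝕜) (hbasis : IsMarkushevichBasis e f)
    (w : ℕ → ℝ) (hw : ∀ i, 0 < w i)
    (C s : ℝ) (hC : 0 < C) (hs0 : 0 < s) (hs1 : s ≤ 1)
    (hsg : SemiGreedy e f w C s)
    (C₁ : ℝ)
    (hC₁ : C₁ = 3 * C * s⁻¹ * (1 + (⨆ i, ‖e i‖) * (⨆ i, ‖f i‖)) * (⨆ i, ‖e i‖) *
      max (2 * ⨅ j, (w j)⁻¹) 1) :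
    (∀ (A : Finset ℕ) (ε : ℕ → 𝕜), (∀ i ∈ A, ‖ε i‖ = 1) →
      ‖∑ i ∈ A, ε i • e i‖ ≤ C₁ * max (∑ i ∈ A, w i) 1) ∧
    (∀ g : X →L[𝕜] 𝕜, ‖g‖ = 1 → wsum w {j | C₁ * w j < ‖g (e j)‖} ≤ 1) ∧
    (∀ (m : ℕ) (W : ℝ), (∀ B : Finset ℕ, B.card ≤ m → (∑ i ∈ B, w i) ≤ W) →
      ∀ A : Finset ℕ, A.card ≤ m → ∀ x : X,
        ‖proj e f A x‖ ≤ C₁ * (⨆ i, ‖f i‖) * max W 1 * ‖x‖) :=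
  statement12_general e f hbasis w hw C s hs0 hs1 hsg C₁ hC₁

end GreedyPaper
end
end

section
/- Let ℬ be a Markushevich basis of 𝕏, w a weight and C > 0. Then ℬ is C-w-disjoint almost greedy if and only if ℬ is C-w-almost greedy. -/
open scoped BigOperators ENNReal
open Filter

noncomputable section

namespace GreedyPaper

variable {𝕜 : Type*} [RCLike 𝕜] {X : Type*} [NormedAddCommGroup X] [NormedSpace 𝕜 X]

lemma fproj_aux (e : ℕ → X) (f : ℕ → X →L[𝕜] 𝕜) (hbasis : IsMarkushevichBasis e f)
    (S : Finset ℕ) (x : X) (i : ℕ) :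
    f i (proj e f S x) = if i ∈ S then f i x else 0 := by
  simp only [proj, map_sum, map_smul, hbasis.biorth, smul_eq_mul, mul_ite, mul_one, mul_zero]
  simp [Finset.sum_ite_eq S i fun j => f j x, eq_comm]

lemma wsum_coe_aux (w : ℕ → ℝ) (A : Finset ℕ) :
    wsum w (A : Set ℕ) = ∑ i ∈ A, ENNReal.ofReal (w i) := by
  rw [wsum]; exact Finset.tsum_subtype' A fun i => ENNReal.ofReal (w i)

/-- C-w-disjoint almost greedy ⟺ C-w-almost greedy. -/
theorem statement14 {𝕜 : Type*} [RCLike 𝕜] {X : Type*} [NormedAddCommGroup X]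
    [NormedSpace 𝕜 X] [CompleteSpace X]
    (e : ℕ → X) (f : ℕ → X →L[𝕜] 𝕜) (hbasis : IsMarkushevichBasis e f)
    (w : ℕ → ℝ) (hw : ∀ i, 0 < w i) (C : ℝ) (hC : 0 < C) :
    DisjointAlmostGreedy e f w C ↔ AlmostGreedy e f w C := by
  constructor
  · intro h x m A hA B hB
    set y := x - proj e f (A ∩ B) x with hy
    have hfy : ∀ i, f i y = if i ∈ A ∩ B then 0 else f i x := by
      intro i
      simp only [hy, map_sub, fproj_aux e f hbasis]
      split <;> simp
    -- A \ B is a greedy set for y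
    have hgreedy : GreedySet f y (A \ B).card 1 (A \ B) := by
      refine ⟨rfl, fun j hj k hk => ?_⟩
      rw [one_mul, hfy j, hfy k]
      have hjAB : j ∉ A ∩ B := fun hm =>
        (Finset.mem_sdiff.mp hj).2 (Finset.mem_inter.mp hm).2
      rw [if_neg hjAB]
      by_cases hk2 : k ∈ A ∩ B
      · rw [if_pos hk2]; simp
      · rw [if_neg hk2]
        have hkA : k ∉ A := by
          intro hkA
          by_cases hkB : k ∈ B
          · exact hk2 (Finset.mem_inter.mpr ⟨hkA, hkB⟩)
          · exact hk (Finset.mem_sdiff.mpr ⟨hkA, hkB⟩)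
        simpa using hA.2 j (Finset.mem_sdiff.mp hj).1 k hkA
    -- weight comparison
    have hwfin : wsum w ((A ∩ B : Finset ℕ) : Set ℕ) ≠ ⊤ := by
      rw [wsum_coe_aux]
      exact (ENNReal.sum_lt_top.mpr fun i _ => ENNReal.ofReal_lt_top).ne
    have d1 : Disjoint (A ∩ B) (A \ B) := Finset.disjoint_left.mpr fun a ha hb =>
      (Finset.mem_sdiff.mp hb).2 (Finset.mem_inter.mp ha).2
    have d2 : Disjoint (A ∩ B) (B \ A) := Finset.disjoint_left.mpr fun a ha hb =>
      (Finset.mem_sdiff.mp hb).2 (Finset.mem_inter.mp ha).1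
    have u1 : A ∩ B ∪ A \ B = A := by
      ext i; simp only [Finset.mem_union, Finset.mem_inter, Finset.mem_sdiff]; tauto
    have u2 : A ∩ B ∪ B \ A = B := by
      ext i; simp only [Finset.mem_union, Finset.mem_inter, Finset.mem_sdiff]; tauto
    have hsplitA : wsum w (A : Set ℕ) =
        wsum w ((A ∩ B : Finset ℕ) : Set ℕ) + wsum w ((A \ B : Finset ℕ) : Set ℕ) := by
      simp only [wsum_coe_aux]
      rw [← Finset.sum_union d1, u1]
    have hsplitB : wsum w (B : Set ℕ) =
        wsum w ((A ∩ B : Finset ℕ) : Set ℕ) + wsum w ((B \ A : Finset ℕ) : Set ℕ) := by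
      simp only [wsum_coe_aux]
      rw [← Finset.sum_union d2, u2]
    have hw' : wsum w ((B \ A : Finset ℕ) : Set ℕ) ≤ wsum w ((A \ B : Finset ℕ) : Set ℕ) := by
      rw [hsplitA, hsplitB] at hB
      exact (ENNReal.add_le_add_iff_left hwfin).mp hB
    have hdisj : Disjoint (B \ A) (A \ B) := Finset.disjoint_left.mpr fun a ha hb =>
      (Finset.mem_sdiff.mp ha).2 (Finset.mem_sdiff.mp hb).1
    have key := h y (A \ B).card (A \ B) hgreedy (B \ A) hw' hdisj
    -- rewrite the two sides
    have hproj : ∀ S : Finset ℕ, Disjoint S (A ∩ B) → proj e f S y = proj e f S x := by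
      intro S hS
      refine Finset.sum_congr rfl fun i hi => ?_
      rw [hfy i, if_neg (Finset.disjoint_left.mp hS hi)]
    have e1 : y - proj e f (A \ B) y = x - proj e f A x := by
      rw [hproj _ (Finset.sdiff_disjoint.mono_right Finset.inter_subset_right), hy]
      have : proj e f A x = proj e f (A ∩ B) x + proj e f (A \ B) x := by
        rw [proj, proj, proj, ← Finset.sum_union d1, u1]
      rw [this]; abel
    have e2 : y - proj e f (B \ A) y = x - proj e f B x := by
      rw [hproj _ (Finset.sdiff_disjoint.mono_right Finset.inter_subset_left), hy]
      have : proj e f B x = proj e f (A ∩ B) x + proj e f (B \ A) x := by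
        rw [proj, proj, proj, ← Finset.sum_union d2, u2]
      rw [this]; abel
    rwa [e1, e2] at key
  · intro h x m A hA B hB _
    exact h x m A hA B hB

end GreedyPaper
end
end

section
/- Let ℬ be a Markushevich basis of 𝕏, x ∈ 𝕏 and ε > 0. Then: (i) for every finite D ⊂ ℕ there is y ∈ 𝕏 with finite support such that ‖x − y‖ < ε and P_D(x) = P_D(y); (ii) for every m₀ ∈ ℕ and every 0 < t ≤ 1, there is y ∈ 𝕏 with finite support such that ‖x − y‖ < ε and, for each 1 ≤ m ≤ m₀, 𝒢(x,m,t) = 𝒢(y,m,t) and P_A(y) = P_A(x) for every A ∈ 𝒢(x,m,t). -/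
open scoped BigOperators ENNReal
open Filter

noncomputable section

namespace GreedyPaper

variable {𝕜 : Type*} [RCLike 𝕜] {X : Type*} [NormedAddCommGroup X] [NormedSpace 𝕜 X]

lemma msupp_finite_of_mem_span (e : ℕ → X) (f : ℕ → X →L[𝕜] 𝕜)
    (hb : ∀ i j, f i (e j) = if i = j then 1 else 0)
    {z : X} (hz : z ∈ Submodule.span 𝕜 (Set.range e)) : (msupp f z).Finite := by
  induction hz using Submodule.span_induction with
  | mem v hv =>
    obtain ⟨i, rfl⟩ := hv
    refine (Set.finite_singleton i).subset fun j hj => ?_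
    simp only [msupp, Set.mem_setOf_eq, hb j i] at hj
    by_contra h
    simp [Set.mem_singleton_iff] at h
    simp [h] at hj
  | zero => simp [msupp]
  | add a b _ _ ha hb' =>
    refine (ha.union hb').subset fun j hj => ?_
    simp only [msupp, Set.mem_setOf_eq, map_add] at hj ⊢
    by_contra h
    simp only [Set.mem_union, Set.mem_setOf_eq, not_or, not_not] at h
    simp [h.1, h.2] at hj
  | smul c a _ ha =>
    refine ha.subset fun j hj => ?_
    simp only [msupp, Set.mem_setOf_eq, map_smul, smul_eq_mul] at hj ⊢
    exact fun h => hj (by simp [h])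

lemma approx (e : ℕ → X) (f : ℕ → X →L[𝕜] 𝕜) (hbasis : IsMarkushevichBasis e f)
    (x : X) (D : Finset ℕ) (ε δ : ℝ) (hε : 0 < ε) (hδ : 0 < δ) :
    ∃ y : X, (msupp f y).Finite ∧ ‖x - y‖ < ε ∧ (∀ i ∈ D, f i y = f i x) ∧
      ∀ j ∉ D, ‖f j y‖ ≤ ‖f j x‖ + δ := by
  obtain ⟨F, hF⟩ := hbasis.bddF
  have hFle : ∀ i : ℕ, ‖f i‖ ≤ F := fun i => hF ⟨i, rfl⟩
  have hF0 : 0 ≤ F := le_trans (norm_nonneg _) (hFle 0)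
  set K : ℝ := 1 + ∑ i ∈ D, ‖f i‖ * ‖e i‖ with hK
  have hKpos : 0 < K := by
    have : 0 ≤ ∑ i ∈ D, ‖f i‖ * ‖e i‖ :=
      Finset.sum_nonneg fun i _ => mul_nonneg (norm_nonneg _) (norm_nonneg _)
    linarith
  set η : ℝ := min (ε / K) (δ / (F + 1)) with hη
  have hηpos : 0 < η := lt_min (div_pos hε hKpos) (div_pos hδ (by linarith))
  obtain ⟨z, hz_mem, hz_near⟩ : ∃ z ∈ (Submodule.span 𝕜 (Set.range e) : Submodule 𝕜 X),
      ‖x - z‖ < η := by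
    have := hbasis.dense_span x
    rw [Metric.mem_closure_iff] at this
    obtain ⟨z, hz1, hz2⟩ := this η hηpos
    exact ⟨z, hz1, by rwa [← dist_eq_norm]⟩
  refine ⟨z + ∑ i ∈ D, (f i (x - z)) • e i, ?_, ?_, ?_, ?_⟩
  · -- finite support
    refine ((msupp_finite_of_mem_span e f hbasis.biorth hz_mem).union D.finite_toSet).subset
      fun j hj => ?_
    simp only [msupp, Set.mem_setOf_eq, map_add] at hj
    by_contra h
    simp only [Set.mem_union, Set.mem_setOf_eq, Finset.mem_coe, not_or, not_not] at h
    have hsum : f j (∑ i ∈ D, (f i (x - z)) • e i) = 0 := by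
      rw [map_sum]
      refine Finset.sum_eq_zero fun i hi => ?_
      have hji : j ≠ i := fun hh => h.2 (hh ▸ hi)
      simp [hbasis.biorth j i, hji]
    have hz0 : f j z = 0 := not_not.mp h.1
    rw [hz0, hsum] at hj
    simp at hj
  · -- norm estimate
    have key : x - (z + ∑ i ∈ D, (f i (x - z)) • e i)
        = (x - z) - ∑ i ∈ D, (f i (x - z)) • e i := by abel
    rw [key]
    calc ‖(x - z) - ∑ i ∈ D, (f i (x - z)) • e i‖
        ≤ ‖x - z‖ + ‖∑ i ∈ D, (f i (x - z)) • e i‖ := norm_sub_le _ _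
      _ ≤ ‖x - z‖ + ∑ i ∈ D, ‖f i‖ * ‖e i‖ * ‖x - z‖ := by
          gcongr
          refine (norm_sum_le _ _).trans ?_
          refine Finset.sum_le_sum fun i _ => ?_
          rw [norm_smul]
          calc ‖f i (x - z)‖ * ‖e i‖ ≤ (‖f i‖ * ‖x - z‖) * ‖e i‖ := by
                gcongr; exact (f i).le_opNorm _
            _ = ‖f i‖ * ‖e i‖ * ‖x - z‖ := by ring
      _ = K * ‖x - z‖ := by rw [hK, add_mul, one_mul, Finset.sum_mul]
      _ < K * η := by gcongr
      _ ≤ K * (ε / K) := by gcongr; exact min_le_left _ _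
      _ = ε := by field_simp
  · -- agreement on D
    intro i hi
    rw [map_add, map_sum]
    have : ∀ j ∈ D, f i ((f j (x - z)) • e j) = if i = j then f j (x - z) else 0 := by
      intro j _
      simp only [map_smul, hbasis.biorth i j, smul_eq_mul, mul_ite, mul_one, mul_zero]
    rw [Finset.sum_congr rfl this, Finset.sum_ite_eq D i (fun j => f j (x - z)), if_pos hi,
      map_sub]
    ring
  · -- smallness off D
    intro j hj
    have hsum : f j (∑ i ∈ D, (f i (x - z)) • e i) = 0 := by
      rw [map_sum]
      refine Finset.sum_eq_zero fun i hi => ?_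
      have hji : j ≠ i := fun hh => hj (hh ▸ hi)
      simp [hbasis.biorth j i, hji]
    rw [map_add, hsum, add_zero]
    have : f j z = f j x - f j (x - z) := by rw [map_sub]; ring
    rw [this]
    calc ‖f j x - f j (x - z)‖ ≤ ‖f j x‖ + ‖f j (x - z)‖ := norm_sub_le _ _
      _ ≤ ‖f j x‖ + δ := by
          gcongr
          calc ‖f j (x - z)‖ ≤ ‖f j‖ * ‖x - z‖ := (f j).le_opNorm _
            _ ≤ F * η := mul_le_mul (hFle j) hz_near.le (norm_nonneg _) hF0
            _ ≤ F * (δ / (F + 1)) := mul_le_mul_of_nonneg_left (min_le_right _ _) hF0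
            _ ≤ δ := by
                rw [mul_comm, div_mul_eq_mul_div, div_le_iff₀ (by linarith : (0:ℝ) < F + 1)]
                nlinarith

lemma large_finite (e : ℕ → X) (f : ℕ → X →L[𝕜] 𝕜) (hbasis : IsMarkushevichBasis e f)
    (x : X) (c : ℝ) (hc : 0 < c) : {i : ℕ | c ≤ ‖f i x‖}.Finite := by
  obtain ⟨F, hF⟩ := hbasis.bddF
  have hFle : ∀ i : ℕ, ‖f i‖ ≤ F := fun i => hF ⟨i, rfl⟩
  have hF0 : 0 ≤ F := le_trans (norm_nonneg _) (hFle 0)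
  obtain ⟨z, hz_mem, hz_near⟩ : ∃ z ∈ (Submodule.span 𝕜 (Set.range e) : Submodule 𝕜 X),
      ‖x - z‖ < c / (F + 1) := by
    have := hbasis.dense_span x
    rw [Metric.mem_closure_iff] at this
    have hF1 : (0:ℝ) < F + 1 := by linarith
    obtain ⟨z, hz1, hz2⟩ := this _ (div_pos hc hF1)
    exact ⟨z, hz1, by rwa [← dist_eq_norm]⟩
  refine (msupp_finite_of_mem_span e f hbasis.biorth hz_mem).subset fun i hi => ?_
  simp only [Set.mem_setOf_eq] at hi
  simp only [msupp, Set.mem_setOf_eq]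
  intro h0
  have : ‖f i x‖ = ‖f i (x - z)‖ := by rw [map_sub, h0, sub_zero]
  rw [this] at hi
  have : ‖f i (x - z)‖ ≤ F * (c / (F+1)) :=
    le_trans ((f i).le_opNorm _) (mul_le_mul (hFle i) hz_near.le (norm_nonneg _) hF0)
  have hlt : F * (c / (F + 1)) < c := by
    rw [mul_comm, div_mul_eq_mul_div, div_lt_iff₀ (by linarith : (0:ℝ) < F + 1)]
    nlinarith
  linarith

/-- finitely supported approximation preserving projections and greedy sets. -/
theorem statement16 {𝕜 : Type*} [RCLike 𝕜] {X : Type*} [NormedAddCommGroup X]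
    [NormedSpace 𝕜 X] [CompleteSpace X]
    (e : ℕ → X) (f : ℕ → X →L[𝕜] 𝕜) (hbasis : IsMarkushevichBasis e f)
    (x : X) (ε : ℝ) (hε : 0 < ε) :
    (∀ D : Finset ℕ, ∃ y : X, (msupp f y).Finite ∧ ‖x - y‖ < ε ∧
      proj e f D x = proj e f D y) ∧
    (∀ (m₀ : ℕ) (t : ℝ), 0 < t → t ≤ 1 →
      ∃ y : X, (msupp f y).Finite ∧ ‖x - y‖ < ε ∧
        ∀ m : ℕ, 1 ≤ m → m ≤ m₀ →
          (∀ A : Finset ℕ, GreedySet f x m t A ↔ GreedySet f y m t A) ∧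
          (∀ A : Finset ℕ, GreedySet f x m t A → proj e f A y = proj e f A x)) := by
  constructor
  · intro D
    obtain ⟨y, h1, h2, h3, -⟩ := approx e f hbasis x D ε 1 hε one_pos
    refine ⟨y, h1, h2, ?_⟩
    exact Finset.sum_congr rfl fun i hi => by rw [h3 i hi]
  · intro m₀ t ht ht1
    by_cases hfin : (msupp f x).Finite
    · exact ⟨x, hfin, by simpa using hε, fun m _ _ => ⟨fun A => Iff.rfl, fun A _ => rfl⟩⟩
    · obtain ⟨T, hT_sub, hT_card⟩ := Set.Infinite.exists_subset_card_eq hfin (m₀ + 1)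
      have hTne : T.Nonempty := Finset.card_pos.mp (by omega)
      set r := T.inf' hTne (fun i => ‖f i x‖) with hr
      have hrpos : 0 < r := by
        rw [hr, Finset.lt_inf'_iff]
        intro i hi
        exact norm_pos_iff.mpr (hT_sub (Finset.mem_coe.mpr hi))
      have hrT : ∀ i ∈ T, r ≤ ‖f i x‖ := fun i hi => Finset.inf'_le _ hi
      have htr : 0 < t * r := mul_pos ht hrpos
      set S := (large_finite e f hbasis x (t * r / 2) (by linarith)).toFinset with hS
      have hSmem : ∀ i : ℕ, i ∈ S ↔ t * r / 2 ≤ ‖f i x‖ := fun i => Set.Finite.mem_toFinset _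
      have hTS : T ⊆ S := by
        intro i hi
        refine (hSmem i).mpr ?_
        have h1 := hrT i hi
        nlinarith
      obtain ⟨y, hyfin, hynorm, hagree, hsmall⟩ :=
        approx e f hbasis x S ε (t * r / 2) hε (by linarith)
      have hxk : ∀ k ∉ S, ‖f k x‖ < t * r / 2 := fun k hk =>
        lt_of_not_ge fun h => hk ((hSmem k).mpr h)
      have hyk : ∀ k ∉ S, ‖f k y‖ < t * r := fun k hk =>
        lt_of_le_of_lt (hsmall k hk) (by linarith [hxk k hk])
      have hyT : ∀ i ∈ T, r ≤ ‖f i y‖ := fun i hi => by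
        rw [hagree i (hTS hi)]; exact hrT i hi
      refine ⟨y, hyfin, hynorm, fun m hm1 hmm₀ => ?_⟩
      have hexT : ∀ A : Finset ℕ, A.card = m → ∃ k ∈ T, k ∉ A := by
        intro A hA
        by_contra h
        push_neg at h
        have hsub : T ⊆ A := fun k hk => h k hk
        have := Finset.card_le_card hsub
        omega
      constructor
      · intro A
        constructor
        · rintro ⟨hcard, hg⟩
          obtain ⟨k₀, hk₀T, hk₀A⟩ := hexT A hcard
          have hjlb : ∀ j ∈ A, t * r ≤ ‖f j x‖ := fun j hj =>
            le_trans (mul_le_mul_of_nonneg_left (hrT k₀ hk₀T) ht.le) (hg j hj k₀ hk₀A)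
          have hAS : A ⊆ S := fun j hj => (hSmem j).mpr (by linarith [hjlb j hj])
          refine ⟨hcard, fun j hj k hk => ?_⟩
          rw [hagree j (hAS hj)]
          by_cases hkS : k ∈ S
          · rw [hagree k hkS]; exact hg j hj k hk
          · have h1 : t * ‖f k y‖ ≤ ‖f k y‖ := by nlinarith [norm_nonneg (f k y)]
            linarith [hyk k hkS, hjlb j hj]
        · rintro ⟨hcard, hg⟩
          obtain ⟨k₀, hk₀T, hk₀A⟩ := hexT A hcard
          have hjlb : ∀ j ∈ A, t * r ≤ ‖f j y‖ := fun j hj =>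
            le_trans (mul_le_mul_of_nonneg_left (hyT k₀ hk₀T) ht.le) (hg j hj k₀ hk₀A)
          have hAS : A ⊆ S := by
            intro j hj
            by_contra hjS
            linarith [hyk j hjS, hjlb j hj]
          refine ⟨hcard, fun j hj k hk => ?_⟩
          rw [← hagree j (hAS hj)]
          by_cases hkS : k ∈ S
          · rw [← hagree k hkS]; exact hg j hj k hk
          · have h1 : t * ‖f k x‖ ≤ ‖f k x‖ := by nlinarith [norm_nonneg (f k x)]
            linarith [hxk k hkS, hjlb j hj]
      · rintro A ⟨hcard, hg⟩
        obtain ⟨k₀, hk₀T, hk₀A⟩ := hexT A hcard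
        have hAS : A ⊆ S := by
          intro j hj
          refine (hSmem j).mpr ?_
          have h1 := le_trans (mul_le_mul_of_nonneg_left (hrT k₀ hk₀T) ht.le) (hg j hj k₀ hk₀A)
          linarith
        exact Finset.sum_congr rfl fun i hi => by rw [hagree i (hAS hi)]

end GreedyPaper
end
end

section
/- Let 𝕏 be a Banach space, S ⊂ 𝕏 an infinite bounded set that is uniformly discrete (i.e., there is δ > 0 such that ‖x − y‖ ≥ δ for all distinct x, y ∈ S), and F ⊂ 𝕏 a finite-dimensional subspace. Then for every ε > 0 there exist x, y ∈ S with x ≠ y such that for every scalar b and every z ∈ F, ‖z‖ ≤ (1 + ε)·‖z + b(x − y)‖. -/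
/-!
Fix finitely many norm-one functionals that norm `F` up to a factor `1 - η` (compactness of the
unit sphere of `F` and Hahn–Banach). Together they map the bounded set `S` into a bounded subset of
a finite-dimensional space, so by pigeonhole two distinct points `x, y ∈ S` have images closer
than `η δ ≤ η ‖x - y‖`: every one of the functionals almost annihilates `v = x - y`. Given `z ∈ F`,
the functional that almost norms `z` shows `‖z + b v‖ ≥ (1 - 3η) ‖z‖` when `‖b v‖ ≤ 2 ‖z‖`, and
otherwise the triangle inequality already gives `‖z + b v‖ ≥ ‖z‖`.
-/

open Metric Set

theorem Set.Infinite.exists_ne_dist_lt_of_totallyBounded_image {α β : Type*}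
    [PseudoMetricSpace β] {S : Set α} (hS : S.Infinite) {g : α → β}
    (hg : TotallyBounded (g '' S)) {r : ℝ} (hr : 0 < r) :
    ∃ x ∈ S, ∃ y ∈ S, x ≠ y ∧ dist (g x) (g y) < r := by
  obtain ⟨C, hC, hcover⟩ := totallyBounded_iff.mp hg (r / 2) (half_pos hr)
  obtain ⟨c, -, hc⟩ : ∃ c ∈ C, (S ∩ g ⁻¹' ball c (r / 2)).Infinite := by
    by_contra! h
    refine hS ((hC.biUnion h).subset fun x hx => ?_)
    simpa [hx] using hcover (mem_image_of_mem g hx)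
  obtain ⟨x, ⟨hx, hxc⟩, y, ⟨hy, hyc⟩, hxy⟩ := hc.nontrivial
  refine ⟨x, hx, y, hy, hxy, ?_⟩
  calc dist (g x) (g y) ≤ dist (g x) c + dist (g y) c := dist_triangle_right _ _ _
    _ < r / 2 + r / 2 := add_lt_add hxc hyc
    _ = r := add_halves r

section

variable {𝕜 : Type*} [RCLike 𝕜] {X : Type*} [NormedAddCommGroup X] [NormedSpace 𝕜 X]

theorem Set.Infinite.exists_ne_norm_map_sub_le {E : Type*} [NormedAddCommGroup E]
    [NormedSpace 𝕜 E] [ProperSpace E] (L : X →L[𝕜] E) {S : Set X} (hS : S.Infinite)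
    (hSbdd : Bornology.IsBounded S) {δ : ℝ} (hδ : 0 < δ)
    (hsep : ∀ x ∈ S, ∀ y ∈ S, x ≠ y → δ ≤ ‖x - y‖) {η : ℝ} (hη : 0 < η) :
    ∃ x ∈ S, ∃ y ∈ S, x ≠ y ∧ ‖L (x - y)‖ ≤ η * ‖x - y‖ := by
  have hLS : TotallyBounded (L '' S) :=
    (L.lipschitz.isBounded_image hSbdd).isCompact_closure.totallyBounded.subset subset_closure
  obtain ⟨x, hx, y, hy, hxy, hLxy⟩ := hS.exists_ne_dist_lt_of_totallyBounded_image hLS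
    (mul_pos hη hδ)
  refine ⟨x, hx, y, hy, hxy, ?_⟩
  calc ‖L (x - y)‖ = dist (L x) (L y) := by rw [map_sub, dist_eq_norm]
    _ ≤ η * δ := hLxy.le
    _ ≤ η * ‖x - y‖ := by gcongr; exact hsep x hx y hy hxy

theorem Submodule.exists_finset_almost_norming (F : Submodule 𝕜 X) [FiniteDimensional 𝕜 F]
    {η : ℝ} (hη : 0 < η) :
    ∃ T : Finset (X →L[𝕜] 𝕜), (∀ f ∈ T, ‖f‖ ≤ 1) ∧
      ∀ z ∈ F, z ≠ 0 → ∃ f ∈ T, (1 - η) * ‖z‖ ≤ ‖f z‖ := by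
  classical
  obtain ⟨t, hts, ht, hcover⟩ := finite_cover_balls_of_compact (isCompact_sphere (0 : F) 1) hη
  choose g hg hgc using fun c : F => exists_dual_vector'' 𝕜 (c : X)
  refine ⟨ht.toFinset.image g, ?_, fun z hzF hz => ?_⟩
  · simp only [Finset.mem_image]
    rintro _ ⟨c, -, rfl⟩
    exact hg c
  have hz' : 0 < ‖z‖ := norm_pos_iff.mpr hz
  set u : F := (‖z‖⁻¹ : 𝕜) • ⟨z, hzF⟩
  have hu : u ∈ sphere (0 : F) 1 := by
    simp [u, norm_smul, hz'.ne']
  obtain ⟨c, hct, huc⟩ := mem_iUnion₂.mp (hcover hu)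
  refine ⟨g c, Finset.mem_image_of_mem g (ht.mem_toFinset.mpr hct), ?_⟩
  have hgc1 : ‖g c c‖ = 1 := by
    rw [hgc]; simpa using hts hct
  have hgcu : ‖g c (c - u)‖ < η := by
    refine ((g c).le_opNorm _).trans_lt ?_
    calc ‖g c‖ * ‖((c - u : F) : X)‖ ≤ 1 * dist u c := by
          rw [dist_comm, dist_eq_norm, ← Submodule.coe_norm]; gcongr; exact hg c
      _ < η := by rwa [one_mul]
  have hgz : ‖g c z‖ = ‖z‖ * ‖g c u‖ := by
    simp [u, hz'.ne']
  rw [hgz, mul_comm]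
  gcongr
  calc 1 - η ≤ ‖g c c‖ - ‖g c (c - u)‖ := by linarith
    _ ≤ ‖g c u‖ := by
      rw [map_sub]; simpa using norm_sub_norm_le (g c c) (g c c - g c u)

theorem le_norm_add_smul_of_almost_norming {f : X →L[𝕜] 𝕜} (hf : ‖f‖ ≤ 1) {η : ℝ}
    (hη : 0 ≤ η) {z v : X} (hz : (1 - η) * ‖z‖ ≤ ‖f z‖) (hv : ‖f v‖ ≤ η * ‖v‖) (b : 𝕜) :
    (1 - 3 * η) * ‖z‖ ≤ ‖z + b • v‖ := by
  have hfbv : ‖f (b • v)‖ ≤ η * ‖b • v‖ := by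
    rw [map_smul, smul_eq_mul, norm_mul, norm_smul, mul_left_comm]
    exact mul_le_mul_of_nonneg_left hv (norm_nonneg b)
  have hf_le : ‖f (z + b • v)‖ ≤ ‖z + b • v‖ :=
    (f.le_opNorm _).trans (mul_le_of_le_one_left (norm_nonneg _) hf)
  have hf_sub : ‖f z‖ - ‖f (b • v)‖ ≤ ‖f (z + b • v)‖ := by
    rw [map_add]; exact norm_sub_le_norm_add _ _
  have h_sub : ‖b • v‖ - ‖z‖ ≤ ‖z + b • v‖ := by
    rw [add_comm]; exact norm_sub_le_norm_add _ _
  rcases le_or_gt ‖b • v‖ (2 * ‖z‖) with h | h <;> nlinarith [norm_nonneg z]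

end

theorem statement18_general {𝕜 : Type*} [RCLike 𝕜] {X : Type*} [NormedAddCommGroup X]
    [NormedSpace 𝕜 X]
    (S : Set X) (hSinf : S.Infinite) (hSbdd : Bornology.IsBounded S)
    (δ : ℝ) (hδ : 0 < δ) (hsep : ∀ x ∈ S, ∀ y ∈ S, x ≠ y → δ ≤ ‖x - y‖)
    (F : Submodule 𝕜 X) [FiniteDimensional 𝕜 F]
    (ε : ℝ) (hε : 0 < ε) :
    ∃ x ∈ S, ∃ y ∈ S, x ≠ y ∧
      ∀ b : 𝕜, ∀ z ∈ F, ‖z‖ ≤ (1 + ε) * ‖z + b • (x - y)‖ := by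
  set η := ε / (3 * (1 + ε))
  have hη : 0 < η := by positivity
  obtain ⟨T, hT, hTF⟩ := F.exists_finset_almost_norming hη
  obtain ⟨x, hx, y, hy, hxy, hxyT⟩ :=
    hSinf.exists_ne_norm_map_sub_le (ContinuousLinearMap.pi fun f : T => (f : X →L[𝕜] 𝕜))
      hSbdd hδ hsep hη
  refine ⟨x, hx, y, hy, hxy, fun b z hz => ?_⟩
  rcases eq_or_ne z 0 with rfl | hz0
  · rw [norm_zero]; positivity
  obtain ⟨f, hfT, hfz⟩ := hTF z hz hz0
  have hf : ‖f (x - y)‖ ≤ η * ‖x - y‖ :=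
    (norm_le_pi_norm (fun f : T => (f : X →L[𝕜] 𝕜) (x - y)) ⟨f, hfT⟩).trans hxyT
  calc ‖z‖ = (1 + ε) * ((1 - 3 * η) * ‖z‖) := by simp only [η]; field_simp; ring
    _ ≤ (1 + ε) * ‖z + b • (x - y)‖ := by
      gcongr; exact le_norm_add_smul_of_almost_norming (hT f hfT) hη.le hfz hf b

/-- separation lemma for bounded uniformly discrete sets. -/
theorem statement18 {𝕜 : Type*} [RCLike 𝕜] {X : Type*} [NormedAddCommGroup X]
    [NormedSpace 𝕜 X] [CompleteSpace X]
    (S : Set X) (hSinf : S.Infinite) (hSbdd : Bornology.IsBounded S)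
    (δ : ℝ) (hδ : 0 < δ) (hsep : ∀ x ∈ S, ∀ y ∈ S, x ≠ y → δ ≤ ‖x - y‖)
    (F : Submodule 𝕜 X) [FiniteDimensional 𝕜 F]
    (ε : ℝ) (hε : 0 < ε) :
    ∃ x ∈ S, ∃ y ∈ S, x ≠ y ∧
      ∀ b : 𝕜, ∀ z ∈ F, ‖z‖ ≤ (1 + ε) * ‖z + b • (x - y)‖ :=
  statement18_general S hSinf hSbdd δ hδ hsep F ε hε
end
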